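/- arXiv:1804.05890 — 9 statements merged into one kernel-verified Lean document; each statement's English description precedes it below -/
import Mathlib

section
/- Let N ≥ 1 and r ≥ 0 be integers, t_min > 0, β > 0, and D ≥ t_min. Let (T_{j,k}), for j = 1, ..., N and k = 1, ..., r+1, be mutually independent Pareto(t_min, β) random variables. Then P( max_{1≤j≤N} min_{1≤k≤r+1} T_{j,k} ≤ D ) = (1 − (t_min/D)^{β·(r+1)})^N. -/
/-! The job meets the deadline on `⋂ j, ⋃ k, {T j k ≤ D}`. Independence of the whole array makes
the rows, viewed as vector-valued random variables, independent (the joint law is a product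
measure, and currying it gives a product of products), so the probability factors over tasks.
Within a task, the complement of `⋃ k, {T j k ≤ D}` is `⋂ k, {D < T j k}`, of probability
`((tmin / D) ^ β) ^ (r + 1)`. -/

open MeasureTheory ProbabilityTheory Set

/-- A real random variable `X` is Pareto(`tmin`, `β`): `P(X > t) = (tmin/t)^β` for `t ≥ tmin`
and `P(X > t) = 1` for `t < tmin`. -/
def IsPareto {Ω : Type*} [MeasurableSpace Ω] (μ : Measure Ω) (X : Ω → ℝ)
    (tmin β : ℝ) : Prop :=
  Measurable X ∧
    (∀ t : ℝ, tmin ≤ t → μ {ω | t < X ω} = ENNReal.ofReal ((tmin / t) ^ β)) ∧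
    (∀ t : ℝ, t < tmin → μ {ω | t < X ω} = 1)

theorem ciSup_ciInf_le_iff {ι κ α : Type*} [ConditionallyCompleteLinearOrder α]
    [Finite ι] [Nonempty ι] [Finite κ] [Nonempty κ] {f : ι → κ → α} {a : α} :
    (⨆ i, ⨅ j, f i j) ≤ a ↔ ∀ i, ∃ j, f i j ≤ a := by
  rw [ciSup_le_iff (Set.finite_range _).bddAbove]
  refine forall_congr' fun i => ⟨fun h => ?_, fun ⟨j, hj⟩ => ?_⟩
  · obtain ⟨j, hj⟩ := exists_eq_ciInf_of_finite (f := f i)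
    exact ⟨j, hj ▸ h⟩
  · exact (ciInf_le (Set.finite_range _).bddBelow j).trans hj

theorem ProbabilityTheory.iIndepFun.curry {ι κ Ω 𝓧 : Type*} [MeasurableSpace Ω]
    [MeasurableSpace 𝓧] {P : Measure Ω} [IsProbabilityMeasure P] {X : ι → κ → Ω → 𝓧}
    (mX : ∀ i j, Measurable (X i j)) (h : iIndepFun (fun p : ι × κ => X p.1 p.2) P) :
    iIndepFun (fun i ω j => X i j ω) P := by
  have hrow_law :
      ∀ i, P.map (fun ω j => X i j ω) = Measure.infinitePi fun j => P.map (X i j) :=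
    fun i => (h.precomp (Prod.mk_right_injective i)).map_fun_eq_infinitePi_map (mX i)
  rw [iIndepFun_iff_map_fun_eq_infinitePi_map (fun i => measurable_pi_lambda _ (mX i))]
  simp only [hrow_law]
  have := fun i j => Measure.isProbabilityMeasure_map (μ := P) (mX i j).aemeasurable
  have hjoint := h.map_fun_eq_infinitePi_map (fun p : ι × κ => mX p.1 p.2)
  beta_reduce at hjoint
  rw [← Measure.infinitePi_map_curry, ← hjoint,
    Measure.map_map (MeasurableEquiv.measurable _) (by fun_prop)]
  rfl

theorem ProbabilityTheory.iIndepFun.measure_iInter_iUnion_preimage {ι κ Ω 𝓧 : Type*}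
    [Fintype ι] [Fintype κ] [MeasurableSpace Ω] [MeasurableSpace 𝓧] {P : Measure Ω}
    [IsProbabilityMeasure P] {X : ι → κ → Ω → 𝓧} (mX : ∀ i j, Measurable (X i j))
    (h : iIndepFun (fun p : ι × κ => X p.1 p.2) P) {s : ι → κ → Set 𝓧}
    (hs : ∀ i j, MeasurableSet (s i j)) :
    P (⋂ i, ⋃ j, X i j ⁻¹' s i j) = ∏ i, (1 - ∏ j, P (X i j ⁻¹' (s i j)ᶜ)) := by
  set row : ι → Set (κ → 𝓧) := fun i => ⋃ j, (fun y => y j) ⁻¹' s i j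
  have hrow : ∀ i, MeasurableSet (row i) := fun i =>
    MeasurableSet.iUnion fun j => measurable_pi_apply j (hs i j)
  have hrow_prob :
      ∀ i, P ((fun ω j => X i j ω) ⁻¹' row i) = 1 - ∏ j, P (X i j ⁻¹' (s i j)ᶜ) := by
    intro i
    have hcompl : ((fun ω j => X i j ω) ⁻¹' row i)ᶜ = ⋂ j, X i j ⁻¹' (s i j)ᶜ := by
      ext ω; simp [row]
    rw [← (h.precomp (Prod.mk_right_injective i)).meas_iInter fun j => ⟨_, (hs i j).compl, rfl⟩,
      ← hcompl, prob_compl_eq_one_sub (measurable_pi_lambda _ (mX i) (hrow i)),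
      ENNReal.sub_sub_cancel ENNReal.one_ne_top prob_le_one]
  calc P (⋂ i, ⋃ j, X i j ⁻¹' s i j) = P (⋂ i, (fun ω j => X i j ω) ⁻¹' row i) := by
        congr 1; ext ω; simp [row]
    _ = ∏ i, P ((fun ω j => X i j ω) ⁻¹' row i) :=
        (h.curry mX).meas_iInter fun i => ⟨row i, hrow i, rfl⟩
    _ = ∏ i, (1 - ∏ j, P (X i j ⁻¹' (s i j)ᶜ)) := by simp only [hrow_prob]

theorem ENNReal.one_sub_ofReal_pow {x : ℝ} (hx0 : 0 ≤ x) (hx1 : x ≤ 1) (n : ℕ) :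
    (1 - ENNReal.ofReal x) ^ n = ENNReal.ofReal ((1 - x) ^ n) := by
  rw [ENNReal.ofReal_pow (by linarith), ENNReal.ofReal_sub _ hx0, ENNReal.ofReal_one]

/-- paper's Theorem 1, PoCD of Clone: with `N` tasks, each with `r+1`
mutually independent Pareto(`tmin`, `β`) attempts, the probability that every task
has some attempt finishing by the deadline `D` is `(1 − (tmin/D)^{β(r+1)})^N`. -/
theorem pocd_clone
    {Ω : Type*} [MeasurableSpace Ω] (μ : Measure Ω) [IsProbabilityMeasure μ]
    (N r : ℕ) (hN : 1 ≤ N) (tmin β D : ℝ)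
    (htmin : 0 < tmin) (hβ : 0 < β) (hD : tmin ≤ D)
    (T : Fin N → Fin (r + 1) → Ω → ℝ)
    (hindep : iIndepFun
      (fun p : Fin N × Fin (r + 1) => T p.1 p.2) μ)
    (hpareto : ∀ j k, IsPareto μ (T j k) tmin β) :
    μ {ω | (⨆ j, ⨅ k, T j k ω) ≤ D}
      = ENNReal.ofReal ((1 - (tmin / D) ^ (β * (r + 1 : ℝ))) ^ N) := by
  have : NeZero N := ⟨by omega⟩
  have hbase : 0 ≤ tmin / D := div_nonneg htmin.le (htmin.trans_le hD).le
  set x := (tmin / D) ^ β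
  have hx0 : 0 ≤ x := Real.rpow_nonneg hbase β
  have hx1 : x ≤ 1 := Real.rpow_le_one hbase ((div_le_one (htmin.trans_le hD)).2 hD) hβ.le
  have hevent : {ω | (⨆ j, ⨅ k, T j k ω) ≤ D} = ⋂ j, ⋃ k, T j k ⁻¹' Iic D := by
    ext ω; simp [ciSup_ciInf_le_iff]
  have htail : ∀ j k, μ (T j k ⁻¹' (Iic D)ᶜ) = ENNReal.ofReal x := fun j k => by
    rw [compl_Iic]; exact (hpareto j k).2.1 D hD
  have hexp : (tmin / D) ^ (β * (r + 1 : ℝ)) = x ^ (r + 1) := by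
    rw [← Real.rpow_mul_natCast hbase]; push_cast; rfl
  rw [hevent, hindep.measure_iInter_iUnion_preimage (fun j k => (hpareto j k).1)
      (fun _ _ => measurableSet_Iic)]
  simp only [htail, Finset.prod_const, Finset.card_univ, Fintype.card_fin]
  rw [hexp, ← ENNReal.ofReal_pow hx0]
  exact ENNReal.one_sub_ofReal_pow (pow_nonneg hx0 _) (pow_le_one₀ hx0 hx1) N
end

section
/- Let N ≥ 1 and r ≥ 0 be integers, t_min > 0, β > 0 with β·(r+1) > 1, and τ_kill ≥ 0. Let (T_{j,k}), for j = 1, ..., N and k = 1, ..., r+1, be mutually independent Pareto(t_min, β) random variables, and set W_j = min_{1≤k≤r+1} T_{j,k}. Then E[ Σ_{j=1}^N ( r·τ_kill + W_j ) ] = N·( r·τ_kill + t_min + t_min/(β·(r+1) − 1) ). -/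
/-!
The fastest of `r + 1` independent Pareto(`tmin`, `β`) attempts is Pareto(`tmin`, `β (r + 1)`),
because the survival functions of independent variables multiply under a minimum. A
Pareto(`tmin`, `b`) variable with `b > 1` has mean `tmin + tmin / (b - 1)` by the layer-cake
formula `E[X] = ∫₀^∞ P(X > t) dt`, split at `tmin`; linearity of expectation does the rest.
-/

open MeasureTheory ProbabilityTheory Set

lemma lt_ciInf_iff_of_finite {ι α : Type*} [Finite ι] [Nonempty ι]
    [ConditionallyCompleteLinearOrder α] {f : ι → α} {a : α} :
    a < ⨅ i, f i ↔ ∀ i, a < f i := by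
  obtain ⟨i₀, hi₀⟩ := exists_eq_ciInf_of_finite (f := f)
  refine ⟨fun h i => h.trans_le (ciInf_le (Finite.bddBelow_range f) i), fun h => ?_⟩
  exact hi₀ ▸ h i₀

lemma div_rpow_eq_rpow_mul_rpow_neg {c t : ℝ} (hc : 0 ≤ c) (ht : 0 ≤ t) (b : ℝ) :
    (c / t) ^ b = c ^ b * t ^ (-b) := by
  rw [Real.div_rpow hc ht, Real.rpow_neg ht, div_eq_mul_inv]

lemma integrableOn_Ioi_div_rpow {c b : ℝ} (hc : 0 < c) (hb : 1 < b) :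
    IntegrableOn (fun t : ℝ => (c / t) ^ b) (Ioi c) :=
  IntegrableOn.congr_fun
    ((integrableOn_Ioi_rpow_of_lt (a := -b) (by linarith) hc).const_mul (c ^ b))
    (fun t ht => (div_rpow_eq_rpow_mul_rpow_neg hc.le (hc.trans ht).le b).symm) measurableSet_Ioi

lemma integral_Ioi_div_rpow {c b : ℝ} (hc : 0 < c) (hb : 1 < b) :
    ∫ t in Ioi c, (c / t) ^ b = c / (b - 1) := by
  have hcc : c ^ b * c ^ (-b + 1) = c := by
    rw [← Real.rpow_add hc]; simp
  rw [setIntegral_congr_fun measurableSet_Ioi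
      fun t ht => div_rpow_eq_rpow_mul_rpow_neg hc.le (hc.trans ht).le b,
    integral_const_mul, integral_Ioi_rpow_of_lt (by linarith) hc, mul_div_assoc', mul_neg, hcc,
    neg_div, ← div_neg, neg_add, neg_neg, ← sub_eq_add_neg]

theorem ProbabilityTheory.iIndepFun.measure_lt_ciInf {Ω κ : Type*} [MeasurableSpace Ω]
    {μ : Measure Ω} [Fintype κ] [Nonempty κ] {X : κ → Ω → ℝ} (h : iIndepFun X μ)
    (t : ℝ) :
    μ {ω | t < ⨅ k, X k ω} = ∏ k, μ {ω | t < X k ω} := by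
  have hinter : {ω | t < ⨅ k, X k ω} = ⋂ k ∈ Finset.univ, X k ⁻¹' Ioi t := by
    ext ω
    simp [lt_ciInf_iff_of_finite]
  rw [hinter, h.measure_inter_preimage_eq_mul Finset.univ (fun _ _ => measurableSet_Ioi)]
  rfl

namespace IsPareto

variable {Ω : Type*} [MeasurableSpace Ω] {μ : Measure Ω} {X : Ω → ℝ} {tmin β : ℝ}

lemma ciInf_of_iIndepFun {κ : Type*} [Fintype κ] [Nonempty κ] {Y : κ → Ω → ℝ}
    (hindep : iIndepFun Y μ) (hY : ∀ k, IsPareto μ (Y k) tmin β) (htmin : 0 < tmin) :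
    IsPareto μ (fun ω => ⨅ k, Y k ω) tmin (β * Fintype.card κ) := by
  refine ⟨.iInf fun k => (hY k).1, fun t ht => ?_, fun t ht => ?_⟩
  · have hx : 0 ≤ tmin / t := div_nonneg htmin.le (htmin.le.trans ht)
    simp only [hindep.measure_lt_ciInf, fun k => (hY k).2.1 t ht, Finset.prod_const,
      Finset.card_univ, Real.rpow_mul_natCast hx, ENNReal.ofReal_pow (Real.rpow_nonneg hx β)]
  · simp [hindep.measure_lt_ciInf, fun k => (hY k).2.2 t ht]

variable [IsProbabilityMeasure μ]

lemma ae_nonneg (h : IsPareto μ X tmin β) (htmin : 0 < tmin) : 0 ≤ᵐ[μ] X :=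
  ((ae_iff_prob_eq_one (measurable_const.lt h.1)).2 (h.2.2 0 htmin)).mono fun _ => le_of_lt

lemma lintegral_ofReal_eq (h : IsPareto μ X tmin β) (htmin : 0 < tmin) (hβ : 1 < β) :
    ∫⁻ ω, ENNReal.ofReal (X ω) ∂μ = ENNReal.ofReal (tmin + tmin / (β - 1)) := by
  have hbody : ∫⁻ t in Ioc 0 tmin, μ {ω | t < X ω} = ENNReal.ofReal tmin := by
    have hone : ∀ t ∈ Ioc 0 tmin, μ {ω | t < X ω} = 1 := fun t ht => by
      rcases ht.2.lt_or_eq with ht | rfl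
      · exact h.2.2 t ht
      · simp [h.2.1 t le_rfl, div_self htmin.ne']
    simp [setLIntegral_congr_fun measurableSet_Ioc hone]
  have htail : ∫⁻ t in Ioi tmin, μ {ω | t < X ω} = ENNReal.ofReal (tmin / (β - 1)) := by
    rw [setLIntegral_congr_fun measurableSet_Ioi fun t ht => h.2.1 t (le_of_lt ht),
      ← ofReal_integral_eq_lintegral_ofReal (integrableOn_Ioi_div_rpow htmin hβ)
        (ae_restrict_of_forall_mem measurableSet_Ioi fun t ht =>
          Real.rpow_nonneg (div_nonneg htmin.le (htmin.trans ht).le) β),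
      integral_Ioi_div_rpow htmin hβ]
  rw [lintegral_eq_lintegral_meas_lt μ (h.ae_nonneg htmin) h.1.aemeasurable,
    ← Ioc_union_Ioi_eq_Ioi htmin.le,
    lintegral_union measurableSet_Ioi (Ioc_disjoint_Ioi le_rfl), hbody, htail,
    ENNReal.ofReal_add htmin.le (div_nonneg htmin.le (by linarith))]

lemma integrable (h : IsPareto μ X tmin β) (htmin : 0 < tmin) (hβ : 1 < β) : Integrable X μ :=
  ⟨h.1.aestronglyMeasurable, (hasFiniteIntegral_iff_ofReal (h.ae_nonneg htmin)).2 <|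
    (h.lintegral_ofReal_eq htmin hβ).trans_lt ENNReal.ofReal_lt_top⟩

lemma integral_eq (h : IsPareto μ X tmin β) (htmin : 0 < tmin) (hβ : 1 < β) :
    ∫ ω, X ω ∂μ = tmin + tmin / (β - 1) := by
  rw [integral_eq_lintegral_of_nonneg_ae (h.ae_nonneg htmin) h.1.aestronglyMeasurable,
    h.lintegral_ofReal_eq htmin hβ,
    ENNReal.toReal_ofReal (add_nonneg htmin.le (div_nonneg htmin.le (by linarith)))]

end IsPareto

theorem expected_time_clone_general
    {Ω : Type*} [MeasurableSpace Ω] (μ : Measure Ω) [IsProbabilityMeasure μ]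
    (N r : ℕ) (tmin β τkill : ℝ)
    (htmin : 0 < tmin) (hβr : 1 < β * (r + 1 : ℝ))
    (T : Fin N → Fin (r + 1) → Ω → ℝ)
    (hindep : iIndepFun
      (fun p : Fin N × Fin (r + 1) => T p.1 p.2) μ)
    (hpareto : ∀ j k, IsPareto μ (T j k) tmin β) :
    ∫ ω, (∑ j, ((r : ℝ) * τkill + ⨅ k, T j k ω)) ∂μ
      = (N : ℝ) * ((r : ℝ) * τkill + tmin + tmin / (β * (r + 1 : ℝ) - 1)) := by
  have hW : ∀ j, IsPareto μ (fun ω => ⨅ k, T j k ω) tmin (β * (r + 1 : ℝ)) := fun j => by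
    simpa using IsPareto.ciInf_of_iIndepFun (hindep.precomp (Prod.mk_right_injective j))
      (hpareto j) htmin
  have hcost : ∀ j, Integrable (fun ω => (r : ℝ) * τkill + ⨅ k, T j k ω) μ :=
    fun j => (integrable_const _).add ((hW j).integrable htmin hβr)
  rw [integral_finsetSum _ fun j _ => hcost j]
  calc ∑ j, ∫ ω, ((r : ℝ) * τkill + ⨅ k, T j k ω) ∂μ
      = ∑ _j : Fin N, ((r : ℝ) * τkill + (tmin + tmin / (β * (r + 1 : ℝ) - 1))) := by
        refine Finset.sum_congr rfl fun j _ => ?_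
        rw [integral_add (integrable_const _) ((hW j).integrable htmin hβr),
          (hW j).integral_eq htmin hβr, integral_const, probReal_univ, one_smul]
    _ = _ := by simp only [Finset.sum_const, Finset.card_univ, Fintype.card_fin, nsmul_eq_mul]; ring

/-- paper's Theorem 2, expected machine running time of Clone: with `N` tasks,
each with `r+1` mutually independent Pareto(`tmin`, `β`) attempts, where task `j` costs
`r·τ_kill` plus the time `W_j` of its fastest attempt, the expected total machine time is
`N·(r·τ_kill + tmin + tmin/(β(r+1) − 1))`. -/
theorem expected_time_clone
    {Ω : Type*} [MeasurableSpace Ω] (μ : Measure Ω) [IsProbabilityMeasure μ]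
    (N r : ℕ) (hN : 1 ≤ N) (tmin β τkill : ℝ)
    (htmin : 0 < tmin) (hβ : 0 < β) (hβr : 1 < β * (r + 1 : ℝ)) (hτ : 0 ≤ τkill)
    (T : Fin N → Fin (r + 1) → Ω → ℝ)
    (hindep : iIndepFun
      (fun p : Fin N × Fin (r + 1) => T p.1 p.2) μ)
    (hpareto : ∀ j k, IsPareto μ (T j k) tmin β) :
    ∫ ω, (∑ j, ((r : ℝ) * τkill + ⨅ k, T j k ω)) ∂μ
      = (N : ℝ) * ((r : ℝ) * τkill + tmin + tmin / (β * (r + 1 : ℝ) - 1)) :=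
  expected_time_clone_general μ N r tmin β τkill htmin hβr T hindep hpareto
end

section
/- Let β > 0, β ≠ 1, t_min > 0, D > t_min, 0 ≤ τ_est ≤ τ_kill with t_min ≤ D − τ_est, and let r ≥ 1 be an integer with β·r > 1. Let T_1, X_2, ..., X_{r+1} be mutually independent Pareto(t_min, β) random variables. Define the random variable M = T_1 on the event {T_1 ≤ D}, and M = τ_est + r·(τ_kill − τ_est) + min(T_1 − τ_est, X_2, ..., X_{r+1}) on the event {T_1 > D}. Then E[M] = E1·(1 − (t_min/D)^β) + E2·(t_min/D)^β, where E1 = t_min·D·β·(t_min^{β−1} − D^{β−1})/((1 − β)·(D^β − t_min^β)) and E2 = τ_est + r·(τ_kill − τ_est) + t_min/(β·r − 1) − t_min^{β·r}/((β·r − 1)·(D − τ_est)^{β·r − 1}) + ∫_{D−τ_est}^{∞} (D/(ω + τ_est))^β·(t_min/ω)^{β·r} dω + t_min. -/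
/-!
With `W = min Xₖ` and `c = τ_est + r (τ_kill − τ_est)`,
`M = min(T₁, D) + 1{T₁ > D} (c − D) + 1{T₁ > D} min(T₁ − τ_est, W)`, and each nonnegative
piece is integrated with the layer-cake formula `E[Y] = ∫₀^∞ P(Y > t) dt`.
By independence `W` is Pareto(tmin, βr) and
`P(T₁ > D, T₁ − τ_est > t, W > t) = P(T₁ > max(D, t + τ_est)) P(W > t)`; splitting this integral
at `t = D − τ_est` gives the closed-form part of `E2` (finite since `βr > 1`) and its tail integral.
-/

open MeasureTheory ProbabilityTheory Set

noncomputable def paretoTail (tmin β t : ℝ) : ℝ := if t < tmin then 1 else (tmin / t) ^ β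

section paretoTail

variable {tmin β t : ℝ}

lemma paretoTail_eq_rpow (h : tmin ≤ t) : paretoTail tmin β t = (tmin / t) ^ β := if_neg h.not_gt

lemma paretoTail_eq_one (htmin : 0 < tmin) (h : t ≤ tmin) : paretoTail tmin β t = 1 := by
  rcases h.lt_or_eq with h | rfl
  · exact if_pos h
  · rw [paretoTail_eq_rpow le_rfl, div_self htmin.ne', Real.one_rpow]

lemma paretoTail_eq_mul_rpow_neg (htmin : 0 < tmin) (ht : tmin ≤ t) :
    paretoTail tmin β t = tmin ^ β * t ^ (-β) := by
  have ht0 : 0 < t := htmin.trans_le ht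
  rw [paretoTail_eq_rpow ht, Real.div_rpow htmin.le ht0.le, Real.rpow_neg ht0.le, div_eq_mul_inv]

lemma paretoTail_nonneg (htmin : 0 ≤ tmin) : 0 ≤ paretoTail tmin β t := by
  unfold paretoTail
  split_ifs with h
  · exact zero_le_one
  · exact Real.rpow_nonneg (div_nonneg htmin (htmin.trans (not_lt.1 h))) _

lemma paretoTail_le_one (htmin : 0 ≤ tmin) (hβ : 0 ≤ β) : paretoTail tmin β t ≤ 1 := by
  unfold paretoTail
  split_ifs with h
  · exact le_rfl
  · push Not at h
    exact Real.rpow_le_one (div_nonneg htmin (htmin.trans h))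
      (div_le_one_of_le₀ h (htmin.trans h)) hβ

lemma paretoTail_pow (htmin : 0 ≤ tmin) (n : ℕ) :
    paretoTail tmin β t ^ n = paretoTail tmin (β * n) t := by
  unfold paretoTail
  split_ifs with h
  · exact one_pow n
  · exact (Real.rpow_mul_natCast (div_nonneg htmin (htmin.trans (not_lt.1 h))) β n).symm

lemma measurable_paretoTail : Measurable (paretoTail tmin β) :=
  Measurable.ite measurableSet_Iio measurable_const
    ((measurable_const.div measurable_id).pow_const β)

lemma integrableOn_paretoTail_of_measure_ne_top (htmin : 0 ≤ tmin) (hβ : 0 ≤ β) {s : Set ℝ}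
    (hs : volume s ≠ ⊤) : IntegrableOn (paretoTail tmin β) s :=
  Measure.integrableOn_of_bounded hs measurable_paretoTail.aestronglyMeasurable (M := 1)
    (.of_forall fun _ => by
      rw [Real.norm_of_nonneg (paretoTail_nonneg htmin)]
      exact paretoTail_le_one htmin hβ)

lemma integrableOn_paretoTail_Ioi (htmin : 0 < tmin) (hβ : 1 < β) :
    IntegrableOn (paretoTail tmin β) (Ioi 0) := by
  rw [← Ioc_union_Ioi_eq_Ioi htmin.le]
  refine (integrableOn_paretoTail_of_measure_ne_top htmin.le (by linarith)
    measure_Ioc_lt_top.ne).union ?_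
  exact IntegrableOn.congr_fun
    ((integrableOn_Ioi_rpow_of_lt (by linarith : -β < -1) htmin).const_mul (tmin ^ β))
    (fun t ht => (paretoTail_eq_mul_rpow_neg htmin (le_of_lt ht)).symm) measurableSet_Ioi

lemma integral_paretoTail (htmin : 0 < tmin) (hβ : 0 ≤ β) (hβ1 : β ≠ 1) {b : ℝ} (hb : tmin ≤ b) :
    ∫ t in (0)..b, paretoTail tmin β t
      = tmin / (β - 1) - tmin ^ β / ((β - 1) * b ^ (β - 1)) + tmin := by
  have hii : ∀ a c : ℝ, IntervalIntegrable (paretoTail tmin β) volume a c := fun a c =>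
    intervalIntegrable_iff.2 (integrableOn_paretoTail_of_measure_ne_top htmin.le hβ
      (by simp [Real.volume_uIoc]))
  have hleft : ∫ t in (0)..tmin, paretoTail tmin β t = tmin := by
    rw [intervalIntegral.integral_congr (g := fun _ => 1), intervalIntegral.integral_const,
      smul_eq_mul, mul_one, sub_zero]
    intro t ht
    rw [uIcc_of_le htmin.le] at ht
    exact paretoTail_eq_one htmin ht.2
  have hright : ∫ t in tmin..b, paretoTail tmin β t
      = (tmin ^ β * b ^ (1 - β) - tmin ^ β * tmin ^ (1 - β)) / (1 - β) := by
    rw [intervalIntegral.integral_congr (g := fun t => tmin ^ β * t ^ (-β)),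
      intervalIntegral.integral_const_mul, integral_rpow, neg_add_eq_sub, mul_div_assoc', mul_sub]
    · refine Or.inr ⟨fun h => hβ1 (neg_inj.1 h), fun h0 => ?_⟩
      rw [uIcc_of_le hb] at h0
      exact htmin.not_ge h0.1
    · intro t ht
      rw [uIcc_of_le hb] at ht
      exact paretoTail_eq_mul_rpow_neg htmin ht.1
  have hb0 : 0 < b := htmin.trans_le hb
  have hβ1' : β - 1 ≠ 0 := sub_ne_zero.2 hβ1
  rw [← intervalIntegral.integral_add_adjacent_intervals (hii 0 tmin) (hii tmin b), hleft, hright,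
    ← Real.rpow_add htmin, add_sub_cancel, Real.rpow_one, show 1 - β = -(β - 1) by ring,
    Real.rpow_neg hb0.le]
  field_simp
  ring

lemma integral_paretoTail_sub_mul_eq {D : ℝ} (htmin : 0 < tmin) (hD : tmin < D) (hβ : 0 < β)
    (hβ1 : β ≠ 1) :
    (∫ t in (0)..D, paretoTail tmin β t) - D * (tmin / D) ^ β
      = tmin * D * β * (tmin ^ (β - 1) - D ^ (β - 1)) / ((1 - β) * (D ^ β - tmin ^ β))
        * (1 - (tmin / D) ^ β) := by
  have hD0 : 0 < D := htmin.trans hD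
  have hpow : tmin ^ β < D ^ β := Real.rpow_lt_rpow htmin.le hD hβ
  have hβ1' : β - 1 ≠ 0 := sub_ne_zero.2 hβ1
  have hβ1'' : 1 - β ≠ 0 := sub_ne_zero.2 hβ1.symm
  rw [integral_paretoTail htmin hβ.le hβ1 hD.le, Real.div_rpow htmin.le hD0.le,
    Real.rpow_sub_one htmin.ne', Real.rpow_sub_one hD0.ne']
  field_simp [(sub_pos.2 hpow).ne']
  ring

end paretoTail

section Probability

variable {Ω : Type*} [MeasurableSpace Ω] {μ : Measure Ω}

lemma integrable_and_integral_eq_of_measure_lt {Y : Ω → ℝ} {G : ℝ → ℝ} (hY : AEMeasurable Y μ)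
    (hY0 : 0 ≤ᵐ[μ] Y) (hG0 : ∀ t ∈ Ioi (0 : ℝ), 0 ≤ G t) (hG : IntegrableOn G (Ioi 0))
    (hYG : ∀ t ∈ Ioi (0 : ℝ), μ {ω | t < Y ω} = ENNReal.ofReal (G t)) :
    Integrable Y μ ∧ ∫ ω, Y ω ∂μ = ∫ t in Ioi 0, G t := by
  have hlint : ∫⁻ ω, ENNReal.ofReal (Y ω) ∂μ = ENNReal.ofReal (∫ t in Ioi 0, G t) := by
    rw [lintegral_eq_lintegral_meas_lt μ hY0 hY, ofReal_integral_eq_lintegral_ofReal hG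
      ((ae_restrict_iff' measurableSet_Ioi).2 (.of_forall hG0))]
    exact setLIntegral_congr_fun measurableSet_Ioi hYG
  refine ⟨⟨hY.aestronglyMeasurable, ?_⟩, ?_⟩
  · rw [hasFiniteIntegral_iff_ofReal hY0, hlint]
    exact ENNReal.ofReal_lt_top
  · rw [integral_eq_lintegral_of_nonneg_ae hY0 hY.aestronglyMeasurable, hlint,
      ENNReal.toReal_ofReal (setIntegral_nonneg measurableSet_Ioi hG0)]

lemma ProbabilityTheory.iIndepFun.measure_preimage_inter_iInter_cons {α : Type*}
    [MeasurableSpace α] {r : ℕ} {T : Ω → α} {X : Fin r → Ω → α}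
    (h : iIndepFun (Fin.cons T X : Fin (r + 1) → Ω → α) μ) {A : Set α} {B : Fin r → Set α}
    (hA : MeasurableSet A) (hB : ∀ k, MeasurableSet (B k)) :
    μ (T ⁻¹' A ∩ ⋂ k, X k ⁻¹' B k) = μ (T ⁻¹' A) * ∏ k, μ (X k ⁻¹' B k) := by
  have key := h.measure_inter_preimage_eq_mul Finset.univ (sets := Fin.cons A B)
    (fun i _ => Fin.cases hA hB i)
  simp only [Fin.prod_univ_succ, Fin.cons_zero, Fin.cons_succ] at key
  convert key using 2
  ext ω
  simp [Fin.forall_fin_succ]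

variable {tmin β : ℝ}

lemma IsPareto.measure_lt {X : Ω → ℝ} (hX : IsPareto μ X tmin β) (t : ℝ) :
    μ {ω | t < X ω} = ENNReal.ofReal (paretoTail tmin β t) := by
  unfold paretoTail
  split_ifs with h
  · rw [hX.2.2 t h, ENNReal.ofReal_one]
  · exact hX.2.1 t (not_lt.1 h)

lemma ProbabilityTheory.iIndepFun.measure_lt_inter_lt_iInf {r : ℕ} [NeZero r] {T : Ω → ℝ}
    {X : Fin r → Ω → ℝ} (h : iIndepFun (Fin.cons T X : Fin (r + 1) → Ω → ℝ) μ)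
    (hT : IsPareto μ T tmin β) (hX : ∀ k, IsPareto μ (X k) tmin β) (htmin : 0 ≤ tmin)
    (a s : ℝ) :
    μ ({ω | a < T ω} ∩ {ω | s < ⨅ k, X k ω})
      = ENNReal.ofReal (paretoTail tmin β a * paretoTail tmin (β * r) s) := by
  have hmin : {ω | s < ⨅ k, X k ω} = ⋂ k, X k ⁻¹' Ioi s := by
    ext ω
    simp only [mem_ofPred_eq, mem_iInter, mem_preimage, mem_Ioi]
    refine ⟨fun hs k => hs.trans_le (ciInf_le (Finite.bddBelow_range _) k), fun hs => ?_⟩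
    obtain ⟨k, hk⟩ := exists_eq_ciInf_of_finite (f := fun k => X k ω)
    exact hk ▸ hs k
  rw [hmin]
  refine (h.measure_preimage_inter_iInter_cons (A := Ioi a) measurableSet_Ioi
    (fun _ => measurableSet_Ioi)).trans ?_
  simp only [preimage, mem_Ioi, hT.measure_lt, fun k => (hX k).measure_lt s, Finset.prod_const,
    Finset.card_univ, Fintype.card_fin, ← ENNReal.ofReal_pow (paretoTail_nonneg htmin),
    paretoTail_pow htmin, ← ENNReal.ofReal_mul (paretoTail_nonneg htmin)]

lemma integrable_and_integral_indicator_min_eq {T W : Ω → ℝ} {D τ q : ℝ}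
    (hT : Measurable T) (hW : Measurable W) (hW0 : 0 ≤ᵐ[μ] W)
    (hTW : ∀ a s, μ ({ω | a < T ω} ∩ {ω | s < W ω})
      = ENNReal.ofReal (paretoTail tmin β a * paretoTail tmin q s))
    (htmin : 0 < tmin) (hβ : 0 ≤ β) (hq : 1 < q) (hD : tmin ≤ D) (hDτ : tmin ≤ D - τ) :
    Integrable ({ω | D < T ω}.indicator fun ω => min (T ω - τ) (W ω)) μ ∧
      ∫ ω, {ω | D < T ω}.indicator (fun ω => min (T ω - τ) (W ω)) ω ∂μ
        = (tmin / D) ^ β * ((∫ t in (0)..(D - τ), paretoTail tmin q t)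
            + ∫ t in Ioi (D - τ), (D / (t + τ)) ^ β * (tmin / t) ^ q) := by
  set G : ℝ → ℝ := fun t => paretoTail tmin β (max D (t + τ)) * paretoTail tmin q t
  have hsurv : ∀ t ∈ Ioi (0 : ℝ), μ {ω | t < {ω | D < T ω}.indicator
      (fun ω => min (T ω - τ) (W ω)) ω} = ENNReal.ofReal (G t) := by
    intro t ht
    rw [← hTW]
    congr 1
    ext ω
    by_cases hDT : D < T ω
    · simp [hDT, lt_sub_iff_add_lt]
    · simp [hDT, (mem_Ioi.1 ht).not_gt]
  have hGint : IntegrableOn G (Ioi 0) := by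
    refine (integrableOn_paretoTail_Ioi htmin hq).mono' ?_ (.of_forall fun t => ?_)
    · exact ((measurable_paretoTail.comp (measurable_const.max (measurable_id.add_const τ))).mul
        measurable_paretoTail).aestronglyMeasurable
    · rw [Real.norm_of_nonneg (mul_nonneg (paretoTail_nonneg htmin.le)
        (paretoTail_nonneg htmin.le))]
      exact mul_le_of_le_one_left (paretoTail_nonneg htmin.le) (paretoTail_le_one htmin.le hβ)
  obtain ⟨hint, heq⟩ := integrable_and_integral_eq_of_measure_lt
    (((hT.sub_const τ).min hW).indicator (measurableSet_lt measurable_const hT)).aemeasurable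
    (hW0.mono fun ω hω => indicator_apply_nonneg fun (hDT : D < T ω) => le_min (by linarith) hω)
    (fun t _ => mul_nonneg (paretoTail_nonneg htmin.le) (paretoTail_nonneg htmin.le)) hGint hsurv
  have hDτ0 : 0 ≤ D - τ := htmin.le.trans hDτ
  refine ⟨hint, heq.trans ?_⟩
  rw [← Ioc_union_Ioi_eq_Ioi hDτ0, setIntegral_union (Ioc_disjoint_Ioi le_rfl) measurableSet_Ioi
    (hGint.mono_set Ioc_subset_Ioi_self) (hGint.mono_set (Ioi_subset_Ioi hDτ0)), mul_add,
    intervalIntegral.integral_of_le hDτ0, ← integral_const_mul, ← integral_const_mul]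
  congr 1
  · refine setIntegral_congr_fun measurableSet_Ioc fun t ht => ?_
    simp only [G]
    rw [max_eq_left (by linarith [ht.2] : t + τ ≤ D), paretoTail_eq_rpow hD]
  · refine setIntegral_congr_fun measurableSet_Ioi fun t (ht : D - τ < t) => ?_
    have hD0 : 0 < D := htmin.trans_le hD
    have htτ : 0 < t + τ := by linarith
    simp only [G]
    rw [max_eq_right (by linarith : D ≤ t + τ), paretoTail_eq_rpow (by linarith),
      paretoTail_eq_rpow (by linarith), ← mul_assoc, ← Real.mul_rpow (by positivity)
      (by positivity), div_mul_div_cancel₀ (by positivity)]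

variable [IsProbabilityMeasure μ]

lemma IsPareto.ae_pos {X : Ω → ℝ} (hX : IsPareto μ X tmin β) (htmin : 0 < tmin) :
    ∀ᵐ ω ∂μ, 0 < X ω := by
  rw [ae_iff_measure_eq (measurableSet_lt measurable_const hX.1).nullMeasurableSet, measure_univ]
  exact hX.2.2 0 htmin

lemma IsPareto.integrable_min_and_integral_eq {T : Ω → ℝ} (hT : IsPareto μ T tmin β)
    (htmin : 0 < tmin) (hβ : 0 ≤ β) {D : ℝ} (hD : 0 ≤ D) :
    Integrable (fun ω => min (T ω) D) μ ∧
      ∫ ω, min (T ω) D ∂μ = ∫ t in (0)..D, paretoTail tmin β t := by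
  have hsurv : ∀ t ∈ Ioi (0 : ℝ), μ {ω | t < min (T ω) D}
      = ENNReal.ofReal ((Iio D).indicator (paretoTail tmin β) t) := by
    intro t _
    by_cases htD : t < D
    · simp [htD, hT.measure_lt]
    · simp [htD]
  have hG : IntegrableOn ((Iio D).indicator (paretoTail tmin β)) (Ioi 0) := by
    rw [integrableOn_indicator_iff measurableSet_Iio, Iio_inter_Ioi]
    exact integrableOn_paretoTail_of_measure_ne_top htmin.le hβ measure_Ioo_lt_top.ne
  obtain ⟨hint, heq⟩ := integrable_and_integral_eq_of_measure_lt
    (hT.1.min measurable_const).aemeasurable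
    ((hT.ae_pos htmin).mono fun ω h => le_min h.le hD)
    (fun t _ => indicator_nonneg (fun _ _ => paretoTail_nonneg htmin.le) t) hG hsurv
  refine ⟨hint, heq.trans ?_⟩
  rw [setIntegral_indicator measurableSet_Iio, Ioi_inter_Iio, ← integral_Ioc_eq_integral_Ioo,
    intervalIntegral.integral_of_le hD]

end Probability

theorem expected_time_speculative_restart_general
    {Ω : Type*} [MeasurableSpace Ω] (μ : Measure Ω) [IsProbabilityMeasure μ]
    (r : ℕ) (tmin β D τest τkill : ℝ)
    (htmin : 0 < tmin) (hβ : 0 < β) (hβ1 : β ≠ 1) (hD : tmin < D)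
    (h1 : tmin ≤ D - τest)
    (hβr : 1 < β * (r : ℝ))
    (T1 : Ω → ℝ) (X : Fin r → Ω → ℝ)
    (hindep : iIndepFun
      (Fin.cons T1 X : Fin (r + 1) → Ω → ℝ) μ)
    (hT1 : IsPareto μ T1 tmin β)
    (hX : ∀ k, IsPareto μ (X k) tmin β)
    (M : Ω → ℝ)
    (hM : ∀ ω, M ω = if T1 ω ≤ D then T1 ω
      else τest + (r : ℝ) * (τkill - τest) + min (T1 ω - τest) (⨅ k, X k ω)) :
    ∫ ω, M ω ∂μ
      = (tmin * D * β * (tmin ^ (β - 1) - D ^ (β - 1))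
            / ((1 - β) * (D ^ β - tmin ^ β))) * (1 - (tmin / D) ^ β)
        + (τest + (r : ℝ) * (τkill - τest)
            + tmin / (β * (r : ℝ) - 1)
            - tmin ^ (β * (r : ℝ)) / ((β * (r : ℝ) - 1) * (D - τest) ^ (β * (r : ℝ) - 1))
            + (∫ x in Set.Ioi (D - τest), (D / (x + τest)) ^ β * (tmin / x) ^ (β * (r : ℝ)))
            + tmin) * (tmin / D) ^ β := by
  have : NeZero r := ⟨by rintro rfl; norm_num at hβr⟩
  set c := τest + (r : ℝ) * (τkill - τest)
  have hlate : MeasurableSet {ω | D < T1 ω} := measurableSet_lt measurable_const hT1.1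
  have hW0 : 0 ≤ᵐ[μ] fun ω => ⨅ k, X k ω := by
    filter_upwards [ae_all_iff.2 fun k => (hX k).ae_pos htmin] with ω hω
    exact le_ciInf fun k => (hω k).le
  have hD0 : 0 < D := htmin.trans hD
  obtain ⟨hint_min, h_min⟩ := hT1.integrable_min_and_integral_eq htmin hβ.le hD0.le
  obtain ⟨hint_restart, h_restart⟩ := integrable_and_integral_indicator_min_eq hT1.1
    (Measurable.iInf fun k => (hX k).1) hW0 (hindep.measure_lt_inter_lt_iInf hT1 hX htmin.le)
    htmin hβ.le hβr hD.le h1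
  have hint_const := (integrable_const (c - D)).indicator (μ := μ) hlate
  have hsplit : ∀ ω, M ω = min (T1 ω) D + ({ω | D < T1 ω}.indicator (fun _ => c - D) ω
      + {ω | D < T1 ω}.indicator (fun ω => min (T1 ω - τest) (⨅ k, X k ω)) ω) := by
    intro ω
    by_cases hω : T1 ω ≤ D
    · simp [hM, hω]
    · rw [hM, if_neg hω]
      simp only [min_eq_right (not_le.1 hω).le, mem_ofPred_eq, not_le.1 hω, indicator_of_mem]
      ring
  simp only [hsplit]
  rw [integral_add hint_min (by exact hint_const.add hint_restart),
    integral_add hint_const hint_restart, integral_indicator_const _ hlate, measureReal_def,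
    hT1.2.1 D hD.le, ENNReal.toReal_ofReal (by positivity), h_min, h_restart,
    integral_paretoTail htmin (by positivity) (by linarith) h1]
  linear_combination integral_paretoTail_sub_mul_eq htmin hD hβ hβ1

/-- paper's Theorem 4, expected machine running time per task under
Speculative-Restart: the machine time `M` equals `T₁` if `T₁ ≤ D`, and otherwise
`τ_est + r·(τ_kill − τ_est) + min(T₁ − τ_est, X₂, ..., X_{r+1})`; then
`E[M] = E1·(1 − (tmin/D)^β) + E2·(tmin/D)^β` with `E1`, `E2` as in the paper. -/
theorem expected_time_speculative_restart
    {Ω : Type*} [MeasurableSpace Ω] (μ : Measure Ω) [IsProbabilityMeasure μ]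
    (r : ℕ) (hr : 1 ≤ r) (tmin β D τest τkill : ℝ)
    (htmin : 0 < tmin) (hβ : 0 < β) (hβ1 : β ≠ 1) (hD : tmin < D)
    (hτest : 0 ≤ τest) (hτ : τest ≤ τkill) (h1 : tmin ≤ D - τest)
    (hβr : 1 < β * (r : ℝ))
    (T1 : Ω → ℝ) (X : Fin r → Ω → ℝ)
    (hindep : iIndepFun
      (Fin.cons T1 X : Fin (r + 1) → Ω → ℝ) μ)
    (hT1 : IsPareto μ T1 tmin β)
    (hX : ∀ k, IsPareto μ (X k) tmin β)
    (M : Ω → ℝ)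
    (hM : ∀ ω, M ω = if T1 ω ≤ D then T1 ω
      else τest + (r : ℝ) * (τkill - τest) + min (T1 ω - τest) (⨅ k, X k ω)) :
    ∫ ω, M ω ∂μ
      = (tmin * D * β * (tmin ^ (β - 1) - D ^ (β - 1))
            / ((1 - β) * (D ^ β - tmin ^ β))) * (1 - (tmin / D) ^ β)
        + (τest + (r : ℝ) * (τkill - τest)
            + tmin / (β * (r : ℝ) - 1)
            - tmin ^ (β * (r : ℝ)) / ((β * (r : ℝ) - 1) * (D - τest) ^ (β * (r : ℝ) - 1))
            + (∫ x in Set.Ioi (D - τest), (D / (x + τest)) ^ β * (tmin / x) ^ (β * (r : ℝ)))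
            + tmin) * (tmin / D) ^ β :=
  expected_time_speculative_restart_general μ r tmin β D τest τkill htmin hβ hβ1 hD h1 hβr T1 X
    hindep hT1 hX M hM
end

section
/- Let N ≥ 1 and r ≥ 1 be integers, β > 0, 0 < t_min < D, 0 < τ_est, 0 < φ < 1, and suppose t_min ≤ D − τ_est and t_min·(1 − φ) ≤ D − τ_est. Define R_S-Restart = (1 − t_min^{β·(r+1)}/(D^β·(D − τ_est)^{β·r}))^N and R_S-Resume = (1 − (1 − φ)^{β·(r+1)}·t_min^{β·(r+2)}/(D^β·(D − τ_est)^{β·(r+1)}))^N. Then R_S-Resume > R_S-Restart. -/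
/-- paper's Theorem 7, part 2: for the same `r`, the PoCD of
Speculative-Resume exceeds the PoCD of Speculative-Restart. -/
theorem pocd_resume_gt_restart
    (N r : ℕ) (hN : 1 ≤ N) (hr : 1 ≤ r) (β tmin D τest φ : ℝ)
    (hβ : 0 < β) (htmin : 0 < tmin) (hD : tmin < D) (hτest : 0 < τest)
    (hφ0 : 0 < φ) (hφ1 : φ < 1)
    (h1 : tmin ≤ D - τest) (h2 : tmin * (1 - φ) ≤ D - τest) :
    (1 - (1 - φ) ^ (β * (r + 1 : ℝ)) * tmin ^ (β * (r + 2 : ℝ))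
        / (D ^ β * (D - τest) ^ (β * (r + 1 : ℝ)))) ^ N
      > (1 - tmin ^ (β * (r + 1 : ℝ)) / (D ^ β * (D - τest) ^ (β * (r : ℝ)))) ^ N := by
  have hDτ : 0 < D - τest := lt_of_lt_of_le htmin h1
  have hDpos : 0 < D := htmin.trans hD
  have h1φ : 0 < 1 - φ := by linarith
  have hrpos : (0:ℝ) < (r:ℝ) := by exact_mod_cast Nat.lt_of_lt_of_le Nat.zero_lt_one hr
  -- positivity facts
  have hA : 0 < (1 - φ) ^ (β * (r + 1 : ℝ)) := Real.rpow_pos_of_pos h1φ _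
  have hB : 0 < tmin ^ (β * (r + 1 : ℝ)) := Real.rpow_pos_of_pos htmin _
  have hC : 0 < tmin ^ β := Real.rpow_pos_of_pos htmin _
  have hE : 0 < (D - τest) ^ (β * (r : ℝ)) := Real.rpow_pos_of_pos hDτ _
  have hF : 0 < (D - τest) ^ β := Real.rpow_pos_of_pos hDτ _
  have hG : 0 < D ^ β := Real.rpow_pos_of_pos hDpos _
  -- splitting rpow
  have split1 : tmin ^ (β * (r + 2 : ℝ)) = tmin ^ (β * (r + 1 : ℝ)) * tmin ^ β := by
    rw [← Real.rpow_add htmin]; ring_nf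
  have split2 : (D - τest) ^ (β * (r + 1 : ℝ)) = (D - τest) ^ (β * (r : ℝ)) * (D - τest) ^ β := by
    rw [← Real.rpow_add hDτ]; ring_nf
  have split3 : (1 - φ) ^ (β * (r + 1 : ℝ)) = (1 - φ) ^ (β * (r : ℝ)) * (1 - φ) ^ β := by
    rw [← Real.rpow_add h1φ]; ring_nf
  -- key inequality : (1-φ)^{β(r+1)} * tmin^β < (D-τest)^β
  have key : (1 - φ) ^ (β * (r + 1 : ℝ)) * tmin ^ β < (D - τest) ^ β := by
    have hlt1 : (1 - φ) ^ (β * (r : ℝ)) < 1 :=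
      Real.rpow_lt_one h1φ.le (by linarith) (by positivity)
    have hle : (1 - φ) ^ β * tmin ^ β ≤ (D - τest) ^ β := by
      rw [← Real.mul_rpow h1φ.le htmin.le]
      exact Real.rpow_le_rpow (by positivity) (by linarith [h2]) hβ.le
    have hpos : 0 < (1 - φ) ^ β * tmin ^ β := by positivity
    calc (1 - φ) ^ (β * (r + 1 : ℝ)) * tmin ^ β
        = (1 - φ) ^ (β * (r : ℝ)) * ((1 - φ) ^ β * tmin ^ β) := by rw [split3]; ring
      _ < 1 * ((1 - φ) ^ β * tmin ^ β) := by
          exact mul_lt_mul_of_pos_right hlt1 hpos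
      _ = (1 - φ) ^ β * tmin ^ β := by ring
      _ ≤ (D - τest) ^ β := hle
  -- main inequality between the two ratios
  have hylt : (1 - φ) ^ (β * (r + 1 : ℝ)) * tmin ^ (β * (r + 2 : ℝ))
      / (D ^ β * (D - τest) ^ (β * (r + 1 : ℝ)))
      < tmin ^ (β * (r + 1 : ℝ)) / (D ^ β * (D - τest) ^ (β * (r : ℝ))) := by
    rw [div_lt_div_iff₀ (by positivity) (by positivity)]
    calc (1 - φ) ^ (β * (r + 1 : ℝ)) * tmin ^ (β * (r + 2 : ℝ))
          * (D ^ β * (D - τest) ^ (β * (r : ℝ)))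
        = ((1 - φ) ^ (β * (r + 1 : ℝ)) * tmin ^ β)
            * (tmin ^ (β * (r + 1 : ℝ)) * (D ^ β * (D - τest) ^ (β * (r : ℝ)))) := by
          rw [split1]; ring
      _ < (D - τest) ^ β
            * (tmin ^ (β * (r + 1 : ℝ)) * (D ^ β * (D - τest) ^ (β * (r : ℝ)))) := by
          exact mul_lt_mul_of_pos_right key (by positivity)
      _ = tmin ^ (β * (r + 1 : ℝ)) * (D ^ β * (D - τest) ^ (β * (r + 1 : ℝ))) := by
          rw [split2]; ring
  -- the restart ratio is at most 1
  have hxle1 : tmin ^ (β * (r + 1 : ℝ)) / (D ^ β * (D - τest) ^ (β * (r : ℝ))) ≤ 1 := by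
    rw [div_le_one (by positivity)]
    have e1 : tmin ^ (β * (r + 1 : ℝ)) = tmin ^ β * tmin ^ (β * (r : ℝ)) := by
      rw [← Real.rpow_add htmin]; ring_nf
    rw [e1]
    have l1 : tmin ^ β ≤ D ^ β := Real.rpow_le_rpow htmin.le hD.le hβ.le
    have l2 : tmin ^ (β * (r : ℝ)) ≤ (D - τest) ^ (β * (r : ℝ)) :=
      Real.rpow_le_rpow htmin.le h1 (by positivity)
    exact mul_le_mul l1 l2 (by positivity) (by positivity)
  exact pow_lt_pow_left₀ (by linarith) (by linarith) (by omega)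
end

section
/- Let N ≥ 1 and r ≥ 0 be integers, β > 0, 0 < t_min < D, 0 < τ_est, 0 < φ < 1, and suppose t_min·(1 − φ) ≤ D − τ_est < (1 − φ)·D. Define R_Clone = (1 − (t_min/D)^{β·(r+1)})^N and R_S-Resume = (1 − (1 − φ)^{β·(r+1)}·t_min^{β·(r+2)}/(D^β·(D − τ_est)^{β·(r+1)}))^N. If r·ln((D − τ_est)/((1 − φ)·D)) < ln((1 − φ)·t_min/(D − τ_est)) — equivalently, if r exceeds the threshold ln((1 − φ)·t_min/(D − τ_est))/ln((D − τ_est)/((1 − φ)·D)) — then R_Clone > R_S-Resume; otherwise R_Clone ≤ R_S-Resume. -/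
/-- paper's Theorem 7, part 3: comparison of the PoCD of Clone and of
Speculative-Resume: if `r·ln((D−τ_est)/((1−φ)·D)) < ln((1−φ)·tmin/(D−τ_est))` then
`R_Clone > R_S-Resume`, and otherwise `R_Clone ≤ R_S-Resume`. -/
theorem pocd_clone_vs_resume
    (N r : ℕ) (hN : 1 ≤ N) (β tmin D τest φ : ℝ)
    (hβ : 0 < β) (htmin : 0 < tmin) (hD : tmin < D) (hτest : 0 < τest)
    (hφ0 : 0 < φ) (hφ1 : φ < 1)
    (h1 : tmin * (1 - φ) ≤ D - τest) (h2 : D - τest < (1 - φ) * D) :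
    ((r : ℝ) * Real.log ((D - τest) / ((1 - φ) * D))
        < Real.log ((1 - φ) * tmin / (D - τest)) →
      (1 - (tmin / D) ^ (β * (r + 1 : ℝ))) ^ N
        > (1 - (1 - φ) ^ (β * (r + 1 : ℝ)) * tmin ^ (β * (r + 2 : ℝ))
            / (D ^ β * (D - τest) ^ (β * (r + 1 : ℝ)))) ^ N)
    ∧ (¬ ((r : ℝ) * Real.log ((D - τest) / ((1 - φ) * D))
        < Real.log ((1 - φ) * tmin / (D - τest))) →
      (1 - (tmin / D) ^ (β * (r + 1 : ℝ))) ^ N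
        ≤ (1 - (1 - φ) ^ (β * (r + 1 : ℝ)) * tmin ^ (β * (r + 2 : ℝ))
            / (D ^ β * (D - τest) ^ (β * (r + 1 : ℝ)))) ^ N) := by
  have hφ' : (0:ℝ) < 1 - φ := by linarith
  have hDpos : (0:ℝ) < D := lt_trans htmin hD
  have hDτ : (0:ℝ) < D - τest := lt_of_lt_of_le (by positivity) h1
  set p : ℝ := β * (r + 1 : ℝ) with hp
  have hppos : 0 < p := by positivity
  set A : ℝ := (tmin / D) ^ p with hA
  set B : ℝ := (1 - φ) ^ p * tmin ^ (β * (r + 2 : ℝ)) / (D ^ β * (D - τest) ^ p) with hB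
  have htD : (0:ℝ) < tmin / D := by positivity
  have hA0 : 0 < A := Real.rpow_pos_of_pos htD _
  have hA1 : A < 1 := Real.rpow_lt_one htD.le ((div_lt_one hDpos).mpr hD) hppos
  have hB0 : 0 < B := by
    have := Real.rpow_pos_of_pos hφ' p
    have := Real.rpow_pos_of_pos htmin (β * (r + 2 : ℝ))
    have := Real.rpow_pos_of_pos hDpos β
    have := Real.rpow_pos_of_pos hDτ p
    positivity
  -- B ≤ 1
  have hB1 : B ≤ 1 := by
    rw [hB, div_le_one (by positivity)]
    have hq : β * (r + 2 : ℝ) = p + β := by rw [hp]; ring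
    rw [hq, Real.rpow_add htmin]
    have e1 : (1 - φ) ^ p * (tmin ^ p * tmin ^ β)
        = ((1 - φ) * tmin) ^ p * tmin ^ β := by
      rw [Real.mul_rpow hφ'.le htmin.le]; ring
    rw [e1]
    have h3 : ((1 - φ) * tmin) ^ p ≤ (D - τest) ^ p :=
      Real.rpow_le_rpow (by positivity) (by linarith [h1]) hppos.le
    have h4 : tmin ^ β ≤ D ^ β := Real.rpow_le_rpow htmin.le hD.le hβ.le
    calc ((1 - φ) * tmin) ^ p * tmin ^ β ≤ (D - τest) ^ p * D ^ β := by
          apply mul_le_mul h3 h4 (Real.rpow_nonneg htmin.le _) (Real.rpow_nonneg hDτ.le _)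
      _ = D ^ β * (D - τest) ^ p := by ring
  -- logs
  set a := Real.log (D - τest)
  set b := Real.log (1 - φ)
  set c := Real.log D
  set d := Real.log tmin
  have hlogA : Real.log A = p * (d - c) := by
    rw [hA, Real.log_rpow htD, Real.log_div htmin.ne' hDpos.ne']
  have hlogB : Real.log B = (p * b + (β * (r + 2 : ℝ)) * d) - (β * c + p * a) := by
    rw [hB, Real.log_div (by positivity) (by positivity),
      Real.log_mul (by positivity) (by positivity),
      Real.log_mul (by positivity) (by positivity),
      Real.log_rpow hφ', Real.log_rpow htmin, Real.log_rpow hDpos, Real.log_rpow hDτ]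
  have hdiff : Real.log B - Real.log A
      = β * (((b + d) - a) - (r : ℝ) * (a - (b + c))) := by
    rw [hlogA, hlogB, hp]; ring
  have hC1 : Real.log ((D - τest) / ((1 - φ) * D)) = a - (b + c) := by
    rw [Real.log_div hDτ.ne' (by positivity), Real.log_mul hφ'.ne' hDpos.ne']
  have hC2 : Real.log ((1 - φ) * tmin / (D - τest)) = (b + d) - a := by
    rw [Real.log_div (by positivity) hDτ.ne', Real.log_mul hφ'.ne' htmin.ne']
  have key : ((r : ℝ) * Real.log ((D - τest) / ((1 - φ) * D))
      < Real.log ((1 - φ) * tmin / (D - τest))) ↔ A < B := by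
    rw [hC1, hC2, ← Real.log_lt_log_iff hA0 hB0]
    constructor
    · intro h
      nlinarith [mul_pos hβ (show (0:ℝ) < ((b + d) - a) - (r : ℝ) * (a - (b + c)) by linarith)]
    · intro h
      have h0 : 0 < β * (((b + d) - a) - (r : ℝ) * (a - (b + c))) := by linarith
      nlinarith [h0, hβ]
  constructor
  · intro hC
    have hAB : A < B := key.mp hC
    exact pow_lt_pow_left₀ (by linarith) (by linarith) (by omega)
  · intro hC
    have hBA : B ≤ A := not_lt.mp (fun h => hC (key.mpr h))
    exact pow_le_pow_left₀ (by linarith) (by linarith) N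
end

section
/- Let 0 < t_min < D, β > 0, N ≥ 1 an integer, τ_kill ≥ 0, θ ≥ 0, C ≥ 0, and 0 ≤ R_min < 1. For real r define R(r) = (1 − (t_min/D)^{β·(r+1)})^N, E(r) = N·(r·τ_kill + t_min + t_min/(β·(r+1) − 1)), and U(r) = ln(R(r) − R_min) − θ·C·E(r). Then U is concave on the interval S = { r ∈ ℝ : N·(t_min/D)^{β·(r+1)} < 1, β·(r+1) > 1, and R(r) > R_min }; the first condition is equivalent to r > Γ_Clone := −β^{-1}·(ln N / ln(t_min/D)) − 1. -/
open Real Set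

private lemma affine_combo (p q a b x y : ℝ) (hab : a + b = 1) :
    p * (a * x + b * y) + q = a * (p * x + q) + b * (p * y + q) := by
  linear_combination (-q) * hab

private lemma convexOn_comp_affine {s : Set ℝ} {g : ℝ → ℝ} (hg : ConvexOn ℝ s g) (p q : ℝ) :
    ConvexOn ℝ {r : ℝ | p * r + q ∈ s} (fun r => g (p * r + q)) := by
  refine ⟨?_, ?_⟩
  · intro x hx y hy a b ha hb hab
    show p * (a • x + b • y) + q ∈ s
    simp only [smul_eq_mul]
    rw [affine_combo p q a b x y hab]
    exact hg.1 hx hy ha hb hab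
  · intro x hx y hy a b ha hb hab
    simp only [smul_eq_mul]
    rw [affine_combo p q a b x y hab]
    simpa [smul_eq_mul] using hg.2 hx hy ha hb hab

private lemma concaveOn_comp_affine {s : Set ℝ} {g : ℝ → ℝ} (hg : ConcaveOn ℝ s g) (p q : ℝ) :
    ConcaveOn ℝ {r : ℝ | p * r + q ∈ s} (fun r => g (p * r + q)) := by
  refine ⟨?_, ?_⟩
  · intro x hx y hy a b ha hb hab
    show p * (a • x + b • y) + q ∈ s
    simp only [smul_eq_mul]
    rw [affine_combo p q a b x y hab]
    exact hg.1 hx hy ha hb hab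
  · intro x hx y hy a b ha hb hab
    simp only [smul_eq_mul]
    rw [affine_combo p q a b x y hab]
    simpa [smul_eq_mul] using hg.2 hx hy ha hb hab

private lemma concaveOn_affine {s : Set ℝ} (m k : ℝ) (hs : Convex ℝ s) :
    ConcaveOn ℝ s (fun r => m * r + k) := by
  refine ⟨hs, ?_⟩
  intro x hx y hy a b ha hb hab
  simp only [smul_eq_mul]
  exact le_of_eq (affine_combo m k a b x y hab).symm

private lemma concaveOn_log_comp {s : Set ℝ} {f : ℝ → ℝ} (hf : ConcaveOn ℝ s f)
    (hpos : ∀ x ∈ s, 0 < f x) : ConcaveOn ℝ s (fun x => Real.log (f x)) := by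
  refine ⟨hf.1, ?_⟩
  intro x hx y hy a b ha hb hab
  simp only [smul_eq_mul]
  have hfx := hpos x hx
  have hfy := hpos y hy
  have hcomb : 0 < a * f x + b * f y := by
    rcases lt_or_eq_of_le ha with h | h
    · nlinarith [mul_pos h hfx, mul_nonneg hb hfy.le]
    · have hb1 : b = 1 := by linarith
      simp [← h, hb1, hfy]
  have h1 : a * f x + b * f y ≤ f (a * x + b * y) := by
    simpa [smul_eq_mul] using hf.2 hx hy ha hb hab
  have h2 : a * Real.log (f x) + b * Real.log (f y) ≤ Real.log (a * f x + b * f y) := by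
    simpa [smul_eq_mul] using
      strictConcaveOn_log_Ioi.concaveOn.2 (Set.mem_Ioi.2 hfx) (Set.mem_Ioi.2 hfy) ha hb hab
  calc a * Real.log (f x) + b * Real.log (f y)
      ≤ Real.log (a * f x + b * f y) := h2
    _ ≤ Real.log (f (a * x + b * y)) :=
        (Real.log_le_log_iff hcomb (hcomb.trans_le h1)).mpr h1

private lemma clone_w_concave (c : ℝ) (hc : c < 0) (N : ℕ) (hN : 1 ≤ N) :
    ConcaveOn ℝ {x : ℝ | (N : ℝ) * Real.exp (c * x) < 1}
      (fun x => (1 - Real.exp (c * x)) ^ N) := by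
  have hN0 : (0 : ℝ) < N := by exact_mod_cast Nat.pos_of_ne_zero (by omega)
  have hNR : (1 : ℝ) ≤ N := by exact_mod_cast hN
  have hset : {x : ℝ | (N : ℝ) * Real.exp (c * x) < 1} = Ioi (-Real.log N / c) := by
    ext x
    simp only [mem_setOf_eq, mem_Ioi]
    rw [mul_comm, ← lt_div_iff₀ hN0, ← Real.lt_log_iff_exp_lt (by positivity), one_div,
      Real.log_inv, div_lt_iff_of_neg hc, mul_comm]
  set e : ℝ → ℝ := fun x => Real.exp (c * x) with he_def
  have hde : ∀ x : ℝ, HasDerivAt e (e x * c) x := by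
    intro x
    simpa using ((hasDerivAt_id x).const_mul c).exp
  have hdf : ∀ x : ℝ, HasDerivAt (fun x => 1 - e x) (-(e x * c)) x := fun x =>
    (hde x).const_sub 1
  have hd1 : ∀ x : ℝ, HasDerivAt (fun x => (1 - e x) ^ N)
      ((N : ℝ) * (1 - e x) ^ (N - 1) * (-(e x * c))) x := fun x => (hdf x).pow N
  have hd2 : ∀ x : ℝ, HasDerivAt (fun x => (N : ℝ) * (1 - e x) ^ (N - 1) * (-(e x * c)))
      (((N : ℝ) * (((N - 1 : ℕ) : ℝ) * (1 - e x) ^ (N - 1 - 1) * (-(e x * c)))) * (-(e x * c))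
        + ((N : ℝ) * (1 - e x) ^ (N - 1)) * (-(e x * c * c))) x := by
    intro x
    exact ((((hdf x).pow (N - 1)).const_mul (N : ℝ)).mul ((hde x).mul_const c).neg)
  rw [hset]
  refine concaveOn_of_hasDerivWithinAt2_nonpos (convex_Ioi _) ?_
      (f' := fun x => (N : ℝ) * (1 - e x) ^ (N - 1) * (-(e x * c)))
      (f'' := fun x => ((N : ℝ) * (((N - 1 : ℕ) : ℝ) * (1 - e x) ^ (N - 1 - 1) * (-(e x * c))))
        * (-(e x * c)) + ((N : ℝ) * (1 - e x) ^ (N - 1)) * (-(e x * c * c)))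
      (fun x _ => (hd1 x).hasDerivWithinAt) (fun x _ => (hd2 x).hasDerivWithinAt) ?_
  · exact (Continuous.pow (by fun_prop) N).continuousOn
  · intro x hx
    rw [interior_Ioi] at hx
    beta_reduce
    have hx2 : (N : ℝ) * Real.exp (c * x) < 1 := by
      have : x ∈ {x : ℝ | (N : ℝ) * Real.exp (c * x) < 1} := by rw [hset]; exact hx
      exact this
    set u : ℝ := e x with hu_def
    have hu0 : 0 < u := Real.exp_pos _
    have huN : (N : ℝ) * u < 1 := hx2
    have hu1 : u < 1 := by nlinarith
    set F : ℝ := 1 - u with hF_def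
    have hF0 : 0 < F := by simp only [hF_def]; linarith
    have key : ((N - 1 : ℕ) : ℝ) * u * F ^ (N - 1 - 1) ≤ F ^ (N - 1) := by
      by_cases hN1 : N = 1
      · subst hN1; norm_num
      · have hN2 : 2 ≤ N := by omega
        have hcast : ((N - 1 : ℕ) : ℝ) = (N : ℝ) - 1 := by
          rw [Nat.cast_sub hN, Nat.cast_one]
        have h1 : ((N - 1 : ℕ) : ℝ) * u ≤ F := by
          rw [hcast]; simp only [hF_def]; nlinarith
        have h2 : ((N - 1 : ℕ) : ℝ) * u * F ^ (N - 1 - 1) ≤ F * F ^ (N - 1 - 1) :=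
          mul_le_mul_of_nonneg_right h1 (by positivity)
        have h3 : F * F ^ (N - 1 - 1) = F ^ (N - 1) := by
          rw [← pow_succ']
          congr 1
          omega
        exact h2.trans_eq h3
    have h4 := mul_le_mul_of_nonneg_left key (show (0 : ℝ) ≤ (N : ℝ) * u * c ^ 2 by positivity)
    nlinarith [h4]

/-- paper's Theorem 8, Clone strategy: the net utility
`U(r) = ln(R(r) − R_min) − θ·C·E(r)`, with `R(r)` the Clone PoCD and `E(r)` the Clone
expected machine time, is concave on the set where `N·(tmin/D)^{β(r+1)} < 1`,
`β(r+1) > 1` and `R(r) > R_min`; and the first condition is equivalent to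
`r > Γ_Clone = −β⁻¹·(ln N / ln(tmin/D)) − 1`. -/
theorem utility_clone_concave
    (tmin D β : ℝ) (N : ℕ) (τkill θ C Rmin : ℝ)
    (htmin : 0 < tmin) (hD : tmin < D) (hβ : 0 < β) (hN : 1 ≤ N)
    (hτkill : 0 ≤ τkill) (hθ : 0 ≤ θ) (hC : 0 ≤ C)
    (hRmin0 : 0 ≤ Rmin) (hRmin1 : Rmin < 1)
    (R E U : ℝ → ℝ)
    (hR : ∀ r : ℝ, R r = (1 - (tmin / D) ^ (β * (r + 1))) ^ N)
    (hE : ∀ r : ℝ, E r = (N : ℝ) * (r * τkill + tmin + tmin / (β * (r + 1) - 1)))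
    (hU : ∀ r : ℝ, U r = Real.log (R r - Rmin) - θ * C * E r) :
    ConcaveOn ℝ
      {r : ℝ | (N : ℝ) * (tmin / D) ^ (β * (r + 1)) < 1 ∧ 1 < β * (r + 1) ∧ Rmin < R r}
      U
    ∧ ∀ r : ℝ, ((N : ℝ) * (tmin / D) ^ (β * (r + 1)) < 1 ↔
        r > -β⁻¹ * (Real.log N / Real.log (tmin / D)) - 1) := by
  have hD0 : 0 < D := htmin.trans hD
  have hq0 : 0 < tmin / D := div_pos htmin hD0
  have hq1 : tmin / D < 1 := (div_lt_one hD0).mpr hD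
  set c : ℝ := Real.log (tmin / D) with hcdef
  have hc : c < 0 := Real.log_neg hq0 hq1
  have hN0 : (0 : ℝ) < N := by exact_mod_cast Nat.pos_of_ne_zero (by omega)
  have hNR : (1 : ℝ) ≤ N := by exact_mod_cast hN
  have hrpow : ∀ y : ℝ, (tmin / D) ^ y = Real.exp (c * y) := fun y => by
    rw [Real.rpow_def_of_pos hq0]
  -- Part 2: the equivalence
  have hiff : ∀ r : ℝ, ((N : ℝ) * (tmin / D) ^ (β * (r + 1)) < 1 ↔
      r > -β⁻¹ * (Real.log N / c) - 1) := by
    intro r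
    rw [hrpow]
    have h1 : (N : ℝ) * Real.exp (c * (β * (r + 1))) < 1 ↔
        c * (β * (r + 1)) < -Real.log N := by
      rw [mul_comm, ← lt_div_iff₀ hN0, ← Real.lt_log_iff_exp_lt (by positivity), one_div,
        Real.log_inv]
    rw [h1]
    have h2 : c * (β * (r + 1)) < -Real.log N ↔ -Real.log N / c < β * (r + 1) := by
      rw [div_lt_iff_of_neg hc, mul_comm]
    rw [h2]
    have h3 : -Real.log N / c < β * (r + 1) ↔ (-Real.log N / c) / β < r + 1 := by
      rw [div_lt_iff₀ hβ, mul_comm]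
    rw [h3]
    have h4 : (-Real.log N / c) / β = -β⁻¹ * (Real.log N / c) := by ring
    rw [h4]
    constructor <;> intro h <;> [linarith; linarith]
  -- convexity of the set S
  set S : Set ℝ :=
    {r : ℝ | (N : ℝ) * (tmin / D) ^ (β * (r + 1)) < 1 ∧ 1 < β * (r + 1) ∧ Rmin < R r} with hSdef
  have hSconv : Convex ℝ S := by
    rw [convex_iff_ordConnected]
    constructor
    intro x hx y hy z hz
    obtain ⟨hx1, hx2, hx3⟩ := hx
    have hxz : x ≤ z := hz.1
    have hmono : (tmin / D) ^ (β * (z + 1)) ≤ (tmin / D) ^ (β * (x + 1)) :=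
      Real.rpow_le_rpow_of_exponent_ge hq0 hq1.le (by nlinarith)
    have hqxpos : 0 < (tmin / D) ^ (β * (x + 1)) := Real.rpow_pos_of_pos hq0 _
    have hqx1 : (tmin / D) ^ (β * (x + 1)) < 1 := by nlinarith
    refine ⟨?_, ?_, ?_⟩
    · calc (N : ℝ) * (tmin / D) ^ (β * (z + 1))
          ≤ (N : ℝ) * (tmin / D) ^ (β * (x + 1)) :=
            mul_le_mul_of_nonneg_left hmono hN0.le
        _ < 1 := hx1
    · nlinarith
    · rw [hR] at hx3 ⊢
      have hbase : (0 : ℝ) ≤ 1 - (tmin / D) ^ (β * (x + 1)) := by linarith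
      have hle : (1 - (tmin / D) ^ (β * (x + 1))) ^ N
          ≤ (1 - (tmin / D) ^ (β * (z + 1))) ^ N :=
        pow_le_pow_left₀ hbase (by linarith) N
      exact lt_of_lt_of_le hx3 hle
  -- rewrite U as explicit function V
  have hUV : U = fun r => Real.log ((1 - Real.exp (c * (β * (r + 1)))) ^ N - Rmin)
      + ((-(θ * C * (N : ℝ) * τkill)) * r + (-(θ * C * (N : ℝ) * tmin)))
      + (-(θ * C * (N : ℝ) * tmin * (β * (r + 1) - 1)⁻¹)) := by
    funext r
    rw [hU, hR, hE, hrpow]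
    ring
  constructor
  · -- concavity
    rw [hUV]
    have h0 := clone_w_concave c hc N hN
    -- piece 1: log part
    have hfe : (fun r : ℝ => (fun x : ℝ => (1 - Real.exp (c * x)) ^ N) (β * r + β))
        = (fun r : ℝ => (1 - Real.exp (c * (β * (r + 1)))) ^ N) := by
      funext r
      rw [show β * r + β = β * (r + 1) by ring]
    have h2 : ConcaveOn ℝ {r : ℝ | β * r + β ∈ {x : ℝ | (N : ℝ) * Real.exp (c * x) < 1}}
        (fun r : ℝ => (1 - Real.exp (c * (β * (r + 1)))) ^ N) := by
      rw [← hfe]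
      exact concaveOn_comp_affine h0 β β
    have hW : ConcaveOn ℝ S (fun r : ℝ => (1 - Real.exp (c * (β * (r + 1)))) ^ N) := by
      refine h2.subset (fun r hr => ?_) hSconv
      show (N : ℝ) * Real.exp (c * (β * r + β)) < 1
      rw [show β * r + β = β * (r + 1) by ring, ← hrpow]
      exact hr.1
    have hW' : ConcaveOn ℝ S
        (fun r : ℝ => (1 - Real.exp (c * (β * (r + 1)))) ^ N - Rmin) :=
      hW.sub (convexOn_const Rmin hSconv)
    have hpos : ∀ r ∈ S, 0 < (1 - Real.exp (c * (β * (r + 1)))) ^ N - Rmin := by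
      intro r hr
      have h3 := hr.2.2
      rw [hR, hrpow] at h3
      linarith
    have hP1 : ConcaveOn ℝ S
        (fun r : ℝ => Real.log ((1 - Real.exp (c * (β * (r + 1)))) ^ N - Rmin)) :=
      concaveOn_log_comp hW' hpos
    -- piece 2: affine part
    have hP2 : ConcaveOn ℝ S
        (fun r : ℝ => (-(θ * C * (N : ℝ) * τkill)) * r + (-(θ * C * (N : ℝ) * tmin))) :=
      concaveOn_affine _ _ hSconv
    -- piece 3: inverse part
    have hz : ConvexOn ℝ (Ioi (0 : ℝ)) (fun x : ℝ => x⁻¹) := by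
      simpa using convexOn_zpow (𝕜 := ℝ) (-1)
    have hfe2 : (fun r : ℝ => (fun x : ℝ => x⁻¹) (β * r + (β - 1)))
        = (fun r : ℝ => (β * (r + 1) - 1)⁻¹) := by
      funext r
      show (β * r + (β - 1))⁻¹ = (β * (r + 1) - 1)⁻¹
      rw [show β * r + (β - 1) = β * (r + 1) - 1 by ring]
    have h5 : ConvexOn ℝ {r : ℝ | β * r + (β - 1) ∈ Ioi (0 : ℝ)}
        (fun r : ℝ => (β * (r + 1) - 1)⁻¹) := by
      rw [← hfe2]
      exact convexOn_comp_affine hz β (β - 1)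
    have h6 : ConvexOn ℝ S (fun r : ℝ => (β * (r + 1) - 1)⁻¹) := by
      refine h5.subset (fun r hr => ?_) hSconv
      have := hr.2.1
      show β * r + (β - 1) ∈ Ioi (0 : ℝ)
      simp only [mem_Ioi]
      nlinarith
    have h7 : ConvexOn ℝ S (fun r : ℝ => (θ * C * (N : ℝ) * tmin) • (β * (r + 1) - 1)⁻¹) :=
      h6.smul (by positivity)
    have hP3 : ConcaveOn ℝ S
        (fun r : ℝ => -(θ * C * (N : ℝ) * tmin * (β * (r + 1) - 1)⁻¹)) := by
      have h8 := h7.neg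
      have h9 : (-fun r : ℝ => (θ * C * (N : ℝ) * tmin) • (β * (r + 1) - 1)⁻¹)
          = (fun r : ℝ => -(θ * C * (N : ℝ) * tmin * (β * (r + 1) - 1)⁻¹)) := by
        funext r
        simp [smul_eq_mul]
      rw [h9] at h8
      exact h8
    exact (hP1.add hP2).add hP3
  · exact hiff
end

section
/- Let a > 0, 0 < b < 1, and let N ≥ 1 be an integer. Then the real function f(r) = (1 − a·b^r)^N is concave on the interval { r ∈ ℝ : N·a·b^r ≤ 1 }. -/
/-- concavity sub-claim in the paper's Theorem 8: for `a > 0`, `0 < b < 1`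
and an integer `N ≥ 1`, the function `r ↦ (1 − a·b^r)^N` is concave on
`{r : ℝ | N·a·b^r ≤ 1}`. -/
theorem pocd_shape_concave
    (a b : ℝ) (N : ℕ) (ha : 0 < a) (hb0 : 0 < b) (hb1 : b < 1) (hN : 1 ≤ N) :
    ConcaveOn ℝ {r : ℝ | (N : ℝ) * a * b ^ r ≤ 1}
      (fun r : ℝ => (1 - a * b ^ r) ^ N) := by
  set L := Real.log b with hLdef
  have hL : L < 0 := Real.log_neg hb0 hb1
  have hN1 : (1 : ℝ) ≤ N := by exact_mod_cast hN
  have hN0 : (0 : ℝ) < N := by linarith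
  have hNa : 0 < (N : ℝ) * a := by positivity
  -- the set is a closed ray
  have hset : {r : ℝ | (N : ℝ) * a * b ^ r ≤ 1}
      = Set.Ici (Real.log ((N : ℝ) * a) / (-L)) := by
    ext r
    have hbr : 0 < b ^ r := Real.rpow_pos_of_pos hb0 r
    simp only [Set.mem_setOf_eq, Set.mem_Ici]
    rw [← Real.log_nonpos_iff (by positivity), Real.log_mul hNa.ne' hbr.ne',
      Real.log_rpow hb0, ← hLdef, div_le_iff₀ (by linarith : (0:ℝ) < -L)]
    constructor <;> intro h <;> nlinarith
  -- derivatives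
  have hu : ∀ r : ℝ, HasDerivAt (fun r : ℝ => a * b ^ r) (a * b ^ r * L) r := by
    intro r
    have := ((Real.hasStrictDerivAt_const_rpow hb0 r).hasDerivAt).const_mul a
    simpa [mul_assoc] using this
  have h1 : ∀ r : ℝ, HasDerivAt (fun r : ℝ => 1 - a * b ^ r) (-(a * b ^ r * L)) r :=
    fun r => (hu r).const_sub 1
  have hf : ∀ r : ℝ, HasDerivAt (fun r : ℝ => (1 - a * b ^ r) ^ N)
      ((N : ℝ) * (1 - a * b ^ r) ^ (N - 1) * -(a * b ^ r * L)) r :=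
    fun r => (h1 r).pow N
  have hf' : ∀ r : ℝ, HasDerivAt
      (fun r : ℝ => (N : ℝ) * (1 - a * b ^ r) ^ (N - 1) * -(a * b ^ r * L))
      (((N : ℝ) * (((N - 1 : ℕ) : ℝ) * (1 - a * b ^ r) ^ (N - 1 - 1) * -(a * b ^ r * L)))
          * -(a * b ^ r * L)
        + ((N : ℝ) * (1 - a * b ^ r) ^ (N - 1)) * -(a * b ^ r * L * L)) r :=
    fun r => ((((h1 r).pow (N - 1)).const_mul (N : ℝ)).mul (((hu r).mul_const L).neg))
  rw [hset]
  refine concaveOn_of_hasDerivWithinAt2_nonpos (convex_Ici _)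
    (fun r _ => ((hf r).differentiableAt.continuousAt).continuousWithinAt)
    (fun x _ => (hf x).hasDerivWithinAt) (fun x _ => (hf' x).hasDerivWithinAt) ?_
  intro x hx
  have hxD : (N : ℝ) * a * b ^ x ≤ 1 := by
    have : x ∈ Set.Ici (Real.log ((N : ℝ) * a) / (-L)) := interior_subset hx
    rw [← hset] at this
    exact this
  set u : ℝ := a * b ^ x with hudef
  have hu0 : 0 < u := by rw [hudef]; positivity
  have hNu : (N : ℝ) * u ≤ 1 := by rw [hudef]; linarith [hxD]
  have hu1 : u ≤ 1 := by nlinarith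
  have key : ((N - 1 : ℕ) : ℝ) * (1 - u) ^ (N - 1 - 1) * u ≤ (1 - u) ^ (N - 1) := by
    rcases Nat.lt_or_ge N 2 with h2 | h2
    · interval_cases N
      norm_num
    · have hc : ((N - 1 : ℕ) : ℝ) = (N : ℝ) - 1 := by
        have := Nat.cast_sub hN (R := ℝ); simpa using this
      have hpow : (1 - u) ^ (N - 1) = (1 - u) ^ (N - 1 - 1) * (1 - u) := by
        rw [← pow_succ]
        congr 1
        omega
      rw [hpow, hc]
      have hnn : (0:ℝ) ≤ (1 - u) ^ (N - 1 - 1) := pow_nonneg (by linarith) _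
      have h2' : ((N : ℝ) - 1) * u ≤ 1 - u := by nlinarith
      nlinarith [mul_le_mul_of_nonneg_left h2' hnn]
  have hbr : ((N - 1 : ℕ) : ℝ) * (1 - u) ^ (N - 1 - 1) * u - (1 - u) ^ (N - 1) ≤ 0 := by
    linarith
  have hrw : (((N : ℝ) * (((N - 1 : ℕ) : ℝ) * (1 - a * b ^ x) ^ (N - 1 - 1) * -(a * b ^ x * L)))
          * -(a * b ^ x * L)
        + ((N : ℝ) * (1 - a * b ^ x) ^ (N - 1)) * -(a * b ^ x * L * L))
      = (N : ℝ) * u * L ^ 2 *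
        (((N - 1 : ℕ) : ℝ) * (1 - u) ^ (N - 1 - 1) * u - (1 - u) ^ (N - 1)) := by
    rw [hudef]; ring
  rw [hrw]
  exact mul_nonpos_of_nonneg_of_nonpos
    (mul_nonneg (mul_nonneg hN0.le hu0.le) (sq_nonneg L)) hbr
end

section
/- Let 0 < t_min ≤ D̄, τ_est ≥ 0, τ_kill ≥ τ_est, D ≥ D̄, and β > 0. Then the real function g(r) = r·(τ_kill − τ_est) + t_min/(β·r − 1) − t_min^{β·r}/((β·r − 1)·D̄^{β·r − 1}) + ∫_{D̄}^{∞} (D/(ω + τ_est))^β·(t_min/ω)^{β·r} dω is convex on the interval { r ∈ ℝ : β·r > 1 }. -/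
open MeasureTheory

private lemma rpow_convex_pt {c : ℝ} (hc : 0 < c) (β x y a b : ℝ)
    (ha : 0 ≤ a) (hb : 0 ≤ b) (hab : a + b = 1) :
    c ^ (β * (a * x + b * y)) ≤ a * c ^ (β * x) + b * c ^ (β * y) := by
  have h := convexOn_exp.2 (Set.mem_univ (Real.log c * (β * x)))
    (Set.mem_univ (Real.log c * (β * y))) ha hb hab
  simp only [smul_eq_mul] at h
  rw [Real.rpow_def_of_pos hc, Real.rpow_def_of_pos hc, Real.rpow_def_of_pos hc]
  calc Real.exp (Real.log c * (β * (a * x + b * y)))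
      = Real.exp (a * (Real.log c * (β * x)) + b * (Real.log c * (β * y))) := by
        congr 1; ring
    _ ≤ a * Real.exp (Real.log c * (β * x)) + b * Real.exp (Real.log c * (β * y)) := h

/-- convexity sub-claim, Eq. (jo7), in the paper's Theorem 8 for
Speculative-Restart: the `r`-dependent part of the expected machine running time of a
straggling task,
`g(r) = r·(τ_kill − τ_est) + tmin/(βr − 1) − tmin^{βr}/((βr − 1)·Dbar^{βr−1})
  + ∫_{Dbar}^∞ (D/(ω+τ_est))^β·(tmin/ω)^{βr} dω`  (with `Dbar = D − τ_est`),
is convex on `{r : ℝ | β·r > 1}`. -/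
theorem restart_cost_convex
    (tmin Dbar D τest τkill β : ℝ)
    (htmin : 0 < tmin) (h1 : tmin ≤ Dbar) (hτest : 0 ≤ τest) (hτ : τest ≤ τkill)
    (hDbar : Dbar ≤ D) (hβ : 0 < β) :
    ConvexOn ℝ {r : ℝ | 1 < β * r}
      (fun r : ℝ =>
        r * (τkill - τest) + tmin / (β * r - 1)
          - tmin ^ (β * r) / ((β * r - 1) * Dbar ^ (β * r - 1))
          + ∫ x in Set.Ioi Dbar, (D / (x + τest)) ^ β * (tmin / x) ^ (β * r)) := by
  have hDbar0 : 0 < Dbar := htmin.trans_le h1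
  have hD0 : 0 < D := hDbar0.trans_le hDbar
  set s : Set ℝ := {r : ℝ | 1 < β * r} with hs_def
  have hsconv : Convex ℝ s := by
    have hseq : s = Set.Ioi (1 / β) := by
      ext r
      rw [hs_def, Set.mem_setOf_eq, Set.mem_Ioi, div_lt_iff₀ hβ, mul_comm]
    rw [hseq]; exact convex_Ioi _
  -- integrability on Ioc tmin Dbar
  have int1 : ∀ r : ℝ, IntegrableOn (fun x => (tmin / x) ^ (β * r)) (Set.Ioc tmin Dbar) := by
    intro r
    refine (ContinuousOn.integrableOn_Icc ?_).mono_set Set.Ioc_subset_Icc_self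
    refine ContinuousOn.rpow_const ?_ ?_
    · exact continuousOn_const.div continuousOn_id fun x hx => (htmin.trans_le hx.1).ne'
    · intro x hx
      exact Or.inl (div_ne_zero htmin.ne' (htmin.trans_le hx.1).ne')
  -- continuity on Ioi Dbar
  have cont2 : ∀ r : ℝ,
      ContinuousOn (fun x => (D / (x + τest)) ^ β * (tmin / x) ^ (β * r)) (Set.Ioi Dbar) := by
    intro r
    have hx0 : ∀ x ∈ Set.Ioi Dbar, (0:ℝ) < x := fun x hx => hDbar0.trans hx
    refine ContinuousOn.mul ?_ ?_
    · refine ContinuousOn.rpow_const ?_ ?_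
      · refine continuousOn_const.div ((continuous_id.add continuous_const).continuousOn) ?_
        intro x hx
        have := hx0 x hx
        positivity
      · intro x hx
        have hxp := hx0 x hx
        have : 0 < x + τest := by linarith
        exact Or.inl (div_ne_zero hD0.ne' this.ne')
    · refine ContinuousOn.rpow_const ?_ ?_
      · exact continuousOn_const.div continuousOn_id fun x hx => (hx0 x hx).ne'
      · intro x hx
        exact Or.inl (div_ne_zero htmin.ne' (hx0 x hx).ne')
  -- integrability on Ioi Dbar
  have int2 : ∀ r ∈ s, IntegrableOn
      (fun x => (D / (x + τest)) ^ β * (tmin / x) ^ (β * r)) (Set.Ioi Dbar) := by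
    intro r hr
    have hp : 1 < β * r := hr
    refine Integrable.mono'
      (g := fun x => (D ^ β * tmin ^ (β * r)) * x ^ (-(β + β * r)))
      ((integrableOn_Ioi_rpow_of_lt (by linarith) hDbar0).const_mul _)
      ((cont2 r).aestronglyMeasurable measurableSet_Ioi) ?_
    filter_upwards [ae_restrict_mem measurableSet_Ioi] with x hx
    have hx0 : 0 < x := hDbar0.trans hx
    have hxτ : 0 < x + τest := by linarith
    have hnn : 0 ≤ (D / (x + τest)) ^ β * (tmin / x) ^ (β * r) := by positivity
    rw [Real.norm_eq_abs, abs_of_nonneg hnn]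
    have hle : (D / (x + τest)) ^ β ≤ (D / x) ^ β := by
      refine Real.rpow_le_rpow (div_nonneg hD0.le hxτ.le) ?_ hβ.le
      gcongr <;> linarith
    calc (D / (x + τest)) ^ β * (tmin / x) ^ (β * r)
        ≤ (D / x) ^ β * (tmin / x) ^ (β * r) :=
          mul_le_mul_of_nonneg_right hle (Real.rpow_nonneg (div_nonneg htmin.le hx0.le) _)
      _ = (D ^ β * tmin ^ (β * r)) * x ^ (-(β + β * r)) := by
          rw [Real.div_rpow hD0.le hx0.le, Real.div_rpow htmin.le hx0.le,
            Real.rpow_neg hx0.le, Real.rpow_add hx0]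
          have h1' : (x : ℝ) ^ β ≠ 0 := (Real.rpow_pos_of_pos hx0 _).ne'
          have h2' : (x : ℝ) ^ (β * r) ≠ 0 := (Real.rpow_pos_of_pos hx0 _).ne'
          field_simp
  -- generic convexity of parametrized integrals
  have convInt : ∀ (t : Set ℝ), MeasurableSet t → ∀ F : ℝ → ℝ → ℝ,
      (∀ r ∈ s, IntegrableOn (F r) t) →
      (∀ x ∈ s, ∀ y ∈ s, ∀ a b : ℝ, 0 ≤ a → 0 ≤ b → a + b = 1 →
        ∀ ω ∈ t, F (a * x + b * y) ω ≤ a * F x ω + b * F y ω) →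
      ConvexOn ℝ s (fun r => ∫ ω in t, F r ω) := by
    intro t ht F hint hF
    refine ⟨hsconv, fun x hx y hy a b ha hb hab => ?_⟩
    have hmem : a • x + b • y ∈ s := hsconv hx hy ha hb hab
    simp only [smul_eq_mul] at hmem ⊢
    have hxint := hint x hx
    have hyint := hint y hy
    calc ∫ ω in t, F (a * x + b * y) ω
        ≤ ∫ ω in t, (a * F x ω + b * F y ω) := by
          refine integral_mono_ae (hint _ hmem)
            ((hxint.const_mul a).add (hyint.const_mul b)) ?_
          filter_upwards [ae_restrict_mem ht] with ω hω using
            hF x hx y hy a b ha hb hab ω hω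
      _ = a * (∫ ω in t, F x ω) + b * (∫ ω in t, F y ω) := by
          rw [integral_add (hxint.const_mul a) (hyint.const_mul b),
            integral_const_mul, integral_const_mul]
  have conv1 : ConvexOn ℝ s (fun r => ∫ x in Set.Ioc tmin Dbar, (tmin / x) ^ (β * r)) := by
    refine convInt _ measurableSet_Ioc _ (fun r _ => int1 r) ?_
    intro x hx y hy a b ha hb hab ω hω
    exact rpow_convex_pt (div_pos htmin (htmin.trans hω.1)) β x y a b ha hb hab
  have conv2 : ConvexOn ℝ s
      (fun r => ∫ x in Set.Ioi Dbar, (D / (x + τest)) ^ β * (tmin / x) ^ (β * r)) := by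
    refine convInt _ measurableSet_Ioi _ int2 ?_
    intro x hx y hy a b ha hb hab ω hω
    have hω0 : 0 < ω := hDbar0.trans hω
    have h := rpow_convex_pt (div_pos htmin hω0) β x y a b ha hb hab
    have hk : 0 ≤ (D / (ω + τest)) ^ β := by positivity
    calc (D / (ω + τest)) ^ β * (tmin / ω) ^ (β * (a * x + b * y))
        ≤ (D / (ω + τest)) ^ β * (a * (tmin / ω) ^ (β * x) + b * (tmin / ω) ^ (β * y)) :=
          mul_le_mul_of_nonneg_left h hk
      _ = a * ((D / (ω + τest)) ^ β * (tmin / ω) ^ (β * x))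
            + b * ((D / (ω + τest)) ^ β * (tmin / ω) ^ (β * y)) := by ring
  have convlin : ConvexOn ℝ s (fun r => r * (τkill - τest)) :=
    ⟨hsconv, fun x _ y _ a b _ _ _ => by
      exact le_of_eq (by simp only [smul_eq_mul]; ring)⟩
  have hconv := (convlin.add conv1).add conv2
  -- identity between middle term and the Ioc integral
  have key : ∀ r ∈ s,
      tmin / (β * r - 1) - tmin ^ (β * r) / ((β * r - 1) * Dbar ^ (β * r - 1))
        = ∫ x in Set.Ioc tmin Dbar, (tmin / x) ^ (β * r) := by
    intro r hr
    have hp : 1 < β * r := hr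
    set p := β * r with hpdef
    have hp1 : p - 1 ≠ 0 := sub_ne_zero.mpr (ne_of_gt hp)
    have hpne : -p ≠ -1 := by
      intro h
      exact hp.ne' (neg_inj.mp h)
    have hDp : (Dbar : ℝ) ^ (p - 1) ≠ 0 := (Real.rpow_pos_of_pos hDbar0 _).ne'
    have hnotmem : (0:ℝ) ∉ Set.uIcc tmin Dbar := by
      rw [Set.uIcc_of_le h1]
      intro h
      exact absurd h.1 (not_le.mpr htmin)
    have hcongr : Set.EqOn (fun x : ℝ => (tmin / x) ^ p)
        (fun x : ℝ => tmin ^ p * x ^ (-p)) (Set.uIcc tmin Dbar) := by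
      intro x hx
      rw [Set.uIcc_of_le h1] at hx
      have hx0 : 0 < x := htmin.trans_le hx.1
      simp only
      rw [Real.div_rpow htmin.le hx0.le, Real.rpow_neg hx0.le, div_eq_mul_inv]
    rw [← intervalIntegral.integral_of_le h1, intervalIntegral.integral_congr hcongr,
      intervalIntegral.integral_const_mul, integral_rpow (Or.inr ⟨hpne, hnotmem⟩)]
    have e1 : tmin ^ p * tmin ^ (-p + 1) = tmin := by
      rw [← Real.rpow_add htmin]
      norm_num
    have e2 : Dbar ^ (-p + 1) = (Dbar ^ (p - 1))⁻¹ := by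
      rw [show -p + 1 = -(p - 1) by ring, Real.rpow_neg hDbar0.le]
    have expand : tmin ^ p * ((Dbar ^ (-p + 1) - tmin ^ (-p + 1)) / (-p + 1))
        = (tmin ^ p * (Dbar ^ (p - 1))⁻¹ - tmin) / (-(p - 1)) := by
      calc tmin ^ p * ((Dbar ^ (-p + 1) - tmin ^ (-p + 1)) / (-p + 1))
          = (tmin ^ p * Dbar ^ (-p + 1) - tmin ^ p * tmin ^ (-p + 1)) / (-p + 1) := by
            ring
        _ = (tmin ^ p * (Dbar ^ (p - 1))⁻¹ - tmin) / (-(p - 1)) := by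
            rw [e1, e2, show (-p + 1 : ℝ) = -(p - 1) by ring]
    rw [expand]
    generalize hu : Dbar ^ (p - 1) = u at hDp
    have hne : -(p - 1) ≠ 0 := neg_ne_zero.mpr hp1
    rw [eq_div_iff hne]
    field_simp
    ring
  -- transfer convexity along the identity
  refine ⟨hsconv, fun x hx y hy a b ha hb hab => ?_⟩
  have hmem : a • x + b • y ∈ s := hsconv hx hy ha hb hab
  rw [smul_eq_mul, smul_eq_mul] at hmem
  have heq : ∀ r ∈ s,
      r * (τkill - τest) + tmin / (β * r - 1)
          - tmin ^ (β * r) / ((β * r - 1) * Dbar ^ (β * r - 1))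
          + (∫ x in Set.Ioi Dbar, (D / (x + τest)) ^ β * (tmin / x) ^ (β * r))
        = ((fun r => r * (τkill - τest)) + (fun r => ∫ x in Set.Ioc tmin Dbar, (tmin / x) ^ (β * r))
            + (fun r => ∫ x in Set.Ioi Dbar, (D / (x + τest)) ^ β * (tmin / x) ^ (β * r))) r := by
    intro r hr
    simp only [Pi.add_apply]
    rw [← key r hr]
    ring
  simp only [smul_eq_mul]
  rw [heq _ hx, heq _ hy, heq _ hmem]
  have h2 := hconv.2 hx hy ha hb hab
  simpa only [smul_eq_mul] using h2
end

section
/- Let t_min > 0, β > 0, and 0 < c ≤ 1. Then the real function h(r) = t_min·c^{β·(r+1)}/(β·(r+1) − 1) is convex on the interval { r ∈ ℝ : β·(r+1) > 1 }. -/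
open Real Set

/-- convexity sub-claim, Eq. (jo11), in the paper's Theorem 8 for
Speculative-Resume: for `tmin > 0`, `β > 0` and `0 < c ≤ 1`, the function
`h(r) = tmin·c^{β(r+1)}/(β(r+1) − 1)` is convex on `{r : ℝ | β·(r+1) > 1}`. -/
theorem resume_cost_convex
    (tmin β c : ℝ) (htmin : 0 < tmin) (hβ : 0 < β) (hc0 : 0 < c) (hc1 : c ≤ 1) :
    ConvexOn ℝ {r : ℝ | 1 < β * (r + 1)}
      (fun r : ℝ => tmin * c ^ (β * (r + 1)) / (β * (r + 1) - 1)) := by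
  set S : Set ℝ := {r : ℝ | 1 < β * (r + 1)} with hSdef
  have hSeq : S = Set.Ioi (1 / β - 1) := by
    ext r
    simp only [hSdef, Set.mem_setOf_eq, Set.mem_Ioi]
    rw [sub_lt_iff_lt_add, div_lt_iff₀ hβ, mul_comm]
  have hSconv : Convex ℝ S := hSeq ▸ convex_Ioi _
  have hS : ∀ r ∈ S, 0 < β * (r + 1) - 1 := fun r hr => by
    simp only [hSdef, Set.mem_setOf_eq] at hr; linarith
  set f : ℝ → ℝ := fun r => c ^ (β * (r + 1)) with hfdef
  set g : ℝ → ℝ := fun r => (β * (r + 1) - 1)⁻¹ with hgdef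
  -- convexity of f
  have hf : ConvexOn ℝ S f := by
    have h := convexOn_exp.comp_affineMap
      (AffineMap.lineMap (Real.log c * β) (2 * (Real.log c * β)) : ℝ →ᵃ[ℝ] ℝ)
    have h2 : ConvexOn ℝ Set.univ
        (Real.exp ∘ (AffineMap.lineMap (Real.log c * β) (2 * (Real.log c * β)) : ℝ →ᵃ[ℝ] ℝ)) := by
      simpa using h
    have h3 := h2.subset (Set.subset_univ S) hSconv
    refine h3.congr fun r _ => ?_
    simp only [Function.comp_apply, AffineMap.lineMap_apply_module, hfdef, smul_eq_mul]
    rw [Real.rpow_def_of_pos hc0]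
    congr 1
    ring
  -- convexity of g
  have hg : ConvexOn ℝ S g := by
    have h := (convexOn_zpow (-1)).comp_affineMap
      (AffineMap.lineMap (β - 1) (2 * β - 1) : ℝ →ᵃ[ℝ] ℝ)
    have hset : (AffineMap.lineMap (β - 1) (2 * β - 1) : ℝ →ᵃ[ℝ] ℝ) ⁻¹' Set.Ioi 0 = S := by
      ext r
      simp only [Set.mem_preimage, AffineMap.lineMap_apply_module, Set.mem_Ioi, hSdef,
        Set.mem_setOf_eq, smul_eq_mul]
      constructor <;> intro hr <;> nlinarith
    rw [hset] at h
    refine h.congr fun r _ => ?_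
    simp only [Function.comp_apply, AffineMap.lineMap_apply_module, hgdef, smul_eq_mul,
      zpow_neg, zpow_one]
    congr 1
    ring
  -- nonnegativity
  have hf0 : ∀ ⦃x⦄, x ∈ S → 0 ≤ f x := fun x _ => Real.rpow_nonneg hc0.le _
  have hg0 : ∀ ⦃x⦄, x ∈ S → 0 ≤ g x := fun x hx => inv_nonneg.2 (hS x hx).le
  -- monovariance: both factors are antitone
  have hfa : AntitoneOn f S := fun a _ b _ hab =>
    Real.rpow_le_rpow_of_exponent_ge hc0 hc1 (by nlinarith)
  have hga : AntitoneOn g S := fun a ha b _ hab =>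
    inv_anti₀ (hS a ha) (by nlinarith)
  have hmono : MonovaryOn f g S := hfa.monovaryOn hga
  have hmul : ConvexOn ℝ S (f * g) := hf.mul hg hf0 hg0 hmono
  have := hmul.smul htmin.le
  refine this.congr fun r _ => ?_
  simp only [Pi.smul_apply, Pi.mul_apply, smul_eq_mul, hfdef, hgdef]
  rw [div_eq_mul_inv, mul_assoc]
end
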